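/- arXiv:1506.01119 — 8 statements merged into one kernel-verified Lean document; each statement's English description precedes it below -/
import Mathlib

section
/- In the (2,2,2) scenario, the deterministic product boxes P1, P3, P4 each belong to Q_2, and for all nonnegative reals c1, c3, c4 with c1 + c3 + c4 = 1, the mixture c1 • P1 + c3 • P3 + c4 • P4 belongs to Q_2 if and only if c1 = 0 or c3 = 0 or c4 = 0. In particular, Q_2 in the (2,2,2) scenario is not convex. -/
/-!
Local boxes are realised in `Q_N` by diagonal states and diagonal POVMs; this covers `P1`, `P3`,
`P4` and every mixture of two of them.

For a mixture with `c1, c3, c4 ≠ 0`, the zeros of the box make Alice's outcome `0` on input `0`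
steer Bob into a nonzero vector `u` with `B 0 0 u = B 1 1 u = u`, and her outcome `0` on input `1`
into a nonzero `u'` with `B 0 0 u' = B 1 1 u' = 0`. In dimension two `u, u'` form a basis, so
`B 0 0 = B 1 1`; but Bob's marginals are `p(b = 0 | y = 0) = c4` and `p(b = 1 | y = 1) = c4 + c1`.
Non-convexity follows: the midpoint of `(2/3, 1/3, 0)` and `(0, 1/3, 2/3)` is `(1/3, 1/3, 1/3)`.
-/

open Matrix Kronecker ComplexOrder

/-- A (2,m,v) box: a family of conditional probability distributions. -/
def IsBox (m v : ℕ) (p : Fin m → Fin m → Fin v → Fin v → ℝ) : Prop :=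
  (∀ x y a b, 0 ≤ p x y a b) ∧ ∀ x y, ∑ a, ∑ b, p x y a b = 1

/-- A product box: `p x y a b = f x a * g y b` for local response functions `f`, `g`. -/
def IsProductBox (m v : ℕ) (p : Fin m → Fin m → Fin v → Fin v → ℝ) : Prop :=
  ∃ f g : Fin m → Fin v → ℝ,
    (∀ x a, 0 ≤ f x a) ∧ (∀ y b, 0 ≤ g y b) ∧
    (∀ x, ∑ a, f x a = 1) ∧ (∀ y, ∑ b, g y b = 1) ∧
    ∀ x y a b, p x y a b = f x a * g y b

/-- Membership in `Q_d`: the box is realizable by a shared quantum state of local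
dimension `d` together with local POVMs. -/
def IsQuantumBox (d m v : ℕ) (p : Fin m → Fin m → Fin v → Fin v → ℝ) : Prop :=
  ∃ (ρ : Matrix ((Fin d) × (Fin d)) ((Fin d) × (Fin d)) ℂ)
    (A B : Fin m → Fin v → Matrix (Fin d) (Fin d) ℂ),
    ρ.PosSemidef ∧ ρ.trace = 1 ∧
    (∀ x a, (A x a).PosSemidef) ∧ (∀ x, ∑ a, A x a = 1) ∧
    (∀ y b, (B y b).PosSemidef) ∧ (∀ y, ∑ b, B y b = 1) ∧
    ∀ x y a b, (ρ * (A x a ⊗ₖ B y b)).trace = (p x y a b : ℂ)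

/-- Membership in `L_N`: the box is realizable using shared classical randomness
of dimension `N`. -/
def IsLocalBox (N m v : ℕ) (p : Fin m → Fin m → Fin v → Fin v → ℝ) : Prop :=
  ∃ (w : Fin N → ℝ) (f g : Fin N → Fin m → Fin v → ℝ),
    (∀ l, 0 ≤ w l) ∧ (∑ l, w l = 1) ∧
    (∀ l x a, 0 ≤ f l x a) ∧ (∀ l y b, 0 ≤ g l y b) ∧
    (∀ l x, ∑ a, f l x a = 1) ∧ (∀ l y, ∑ b, g l y b = 1) ∧
    ∀ x y a b, p x y a b = ∑ l, w l * f l x a * g l y b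

/-- The deterministic box `P1`: both parties always output `1`. -/
def P1 : Fin 2 → Fin 2 → Fin 2 → Fin 2 → ℝ :=
  fun _x _y a b => if a = 1 ∧ b = 1 then 1 else 0

/-- The deterministic box `P3`: each party outputs the negation of its input. -/
def P3 : Fin 2 → Fin 2 → Fin 2 → Fin 2 → ℝ :=
  fun x y a b => if a = 1 - x ∧ b = 1 - y then 1 else 0

/-- The deterministic box `P4`: each party outputs its input. -/
def P4 : Fin 2 → Fin 2 → Fin 2 → Fin 2 → ℝ :=
  fun x y a b => if a = x ∧ b = y then 1 else 0

namespace Matrix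

theorem kronecker_sum {R ι l m p q : Type*} [NonUnitalNonAssocSemiring R] (A : Matrix l m R)
    (B : ι → Matrix p q R) (s : Finset ι) : A ⊗ₖ (∑ i ∈ s, B i) = ∑ i ∈ s, A ⊗ₖ B i := by
  ext ⟨_, _⟩ ⟨_, _⟩
  simp [sum_apply, Finset.mul_sum]

theorem sum_kronecker {R ι l m p q : Type*} [NonUnitalNonAssocSemiring R] (A : ι → Matrix l m R)
    (B : Matrix p q R) (s : Finset ι) : (∑ i ∈ s, A i) ⊗ₖ B = ∑ i ∈ s, A i ⊗ₖ B := by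
  ext ⟨_, _⟩ ⟨_, _⟩
  simp [sum_apply, Finset.sum_mul]

open scoped MatrixOrder in
theorem PosSemidef.mul_eq_zero_of_trace_mul_eq_zero {𝕜 n : Type*} [RCLike 𝕜] [Fintype n]
    {A B : Matrix n n 𝕜} (hA : A.PosSemidef) (hB : B.PosSemidef) (h : (A * B).trace = 0) :
    B * A = 0 := by
  classical
  obtain ⟨S, rfl⟩ := CStarAlgebra.nonneg_iff_eq_star_mul_self.mp hA.nonneg
  obtain ⟨C, rfl⟩ := CStarAlgebra.nonneg_iff_eq_star_mul_self.mp hB.nonneg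
  simp only [star_eq_conjTranspose] at h ⊢
  have hCS : C * Sᴴ = 0 := by
    rw [← trace_conjTranspose_mul_self_eq_zero_iff, ← h, conjTranspose_mul,
      conjTranspose_conjTranspose, trace_mul_comm (Sᴴ * S)]
    simp only [Matrix.mul_assoc]
    rw [trace_mul_comm S]
    simp only [Matrix.mul_assoc]
  rw [Matrix.mul_assoc, ← Matrix.mul_assoc C, hCS, Matrix.zero_mul, Matrix.mul_zero]

section traceFst

variable {R n k : Type*} [Fintype n]

def traceFst [AddCommMonoid R] (M : Matrix (n × k) (n × k) R) : Matrix k k R :=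
  of fun j j' => ∑ i, M (i, j) (i, j')

theorem traceFst_zero [AddCommMonoid R] : traceFst (0 : Matrix (n × k) (n × k) R) = 0 := by
  ext
  simp [traceFst]

theorem trace_traceFst [AddCommMonoid R] [Fintype k] (M : Matrix (n × k) (n × k) R) :
    (traceFst M).trace = M.trace := by
  simp only [traceFst, trace, diag, of_apply, Fintype.sum_prod_type]
  exact Finset.sum_comm

theorem traceFst_one_kronecker_mul [CommSemiring R] [Fintype k] [DecidableEq n]
    (B : Matrix k k R) (M : Matrix (n × k) (n × k) R) :
    traceFst ((1 ⊗ₖ B) * M) = B * traceFst M := by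
  ext j j'
  simp [traceFst, mul_apply, Fintype.sum_prod_type, one_apply, Finset.mul_sum, ite_mul]
  exact Finset.sum_comm

end traceFst

/-- Steering: `u` lies in the range of Bob's conditional operator `traceFst ((A ⊗ₖ 1) * ρ)`. -/
theorem exists_ne_zero_mulVec_eq_zero_of_trace_mul_kronecker_eq_zero {𝕜 n k : Type*} [RCLike 𝕜]
    [Fintype n] [Fintype k] [DecidableEq n] [DecidableEq k]
    {ρ : Matrix (n × k) (n × k) 𝕜} {A : Matrix n n 𝕜} (hρ : ρ.PosSemidef) (hA : A.PosSemidef)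
    (hA1 : (ρ * (A ⊗ₖ 1)).trace ≠ 0) :
    ∃ u : k → 𝕜, u ≠ 0 ∧
      ∀ B : Matrix k k 𝕜, B.PosSemidef → (ρ * (A ⊗ₖ B)).trace = 0 → B *ᵥ u = 0 := by
  rw [trace_mul_comm, ← trace_traceFst] at hA1
  set σ := traceFst ((A ⊗ₖ 1) * ρ)
  have hσ : σ ≠ 0 := fun h => hA1 (by rw [h, trace_zero])
  obtain ⟨z, hz⟩ : ∃ z, σ *ᵥ z ≠ 0 := by
    by_contra! h
    exact hσ (ext_iff_mulVec.2 fun v => by simp [h v])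
  refine ⟨σ *ᵥ z, hz, fun B hB h => ?_⟩
  have hBσ : B * σ = 0 := by
    rw [← traceFst_one_kronecker_mul, ← Matrix.mul_assoc, ← mul_kronecker_mul, Matrix.one_mul,
      Matrix.mul_one, hρ.mul_eq_zero_of_trace_mul_eq_zero (hA.kronecker hB) h, traceFst_zero]
  rw [mulVec_mulVec, hBσ, zero_mulVec]

end Matrix

theorem LinearMap.eq_of_eq_on_eigenvectors_of_finrank_eq_two {K V : Type*} [DivisionRing K]
    [AddCommGroup V] [Module K V] (hV : Module.finrank K V = 2) {f g : V →ₗ[K] V} {u u' : V}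
    (hu : u ≠ 0) (hu' : u' ≠ 0) (hfu : f u = u) (hgu : g u = u) (hfu' : f u' = 0)
    (hgu' : g u' = 0) : f = g := by
  have hli : LinearIndependent K ![u, u'] :=
    (LinearIndependent.pair_iff' hu).2 fun a h => hu' <| by rw [← hfu', ← h, map_smul, hfu]
  have hspan := hli.span_eq_top_of_card_eq_finrank (by simp [hV])
  exact LinearMap.ext_on_range hspan fun i => by fin_cases i <;> simp [hfu, hgu, hfu', hgu']

theorem Matrix.eq_of_eq_on_eigenvectors_of_card_eq_two {K n : Type*} [Field K] [Fintype n]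
    [DecidableEq n] (hn : Fintype.card n = 2) {P Q : Matrix n n K} {u u' : n → K}
    (hu : u ≠ 0) (hu' : u' ≠ 0) (hPu : P *ᵥ u = u) (hQu : Q *ᵥ u = u) (hPu' : P *ᵥ u' = 0)
    (hQu' : Q *ᵥ u' = 0) : P = Q :=
  Matrix.toLin'.injective <| LinearMap.eq_of_eq_on_eigenvectors_of_finrank_eq_two
    (by rw [Module.finrank_fintype_fun_eq_card, hn]) hu hu'
    ((toLin'_apply P u).trans hPu) ((toLin'_apply Q u).trans hQu)
    ((toLin'_apply P u').trans hPu') ((toLin'_apply Q u').trans hQu')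

def detBox {m v : ℕ} (s t : Fin m → Fin v) : Fin m → Fin m → Fin v → Fin v → ℝ :=
  fun x y a b => if a = s x ∧ b = t y then 1 else 0

theorem isLocalBox_sum_smul_detBox {N m v : ℕ} {w : Fin N → ℝ} (hw : ∀ l, 0 ≤ w l)
    (hw1 : ∑ l, w l = 1) (s t : Fin N → Fin m → Fin v) :
    IsLocalBox N m v (∑ l, w l • detBox (s l) (t l)) := by
  refine ⟨w, fun l x a => if a = s l x then 1 else 0, fun l y b => if b = t l y then 1 else 0,
    hw, hw1, ?_, ?_, ?_, ?_, ?_⟩ <;> intros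
  · positivity
  · positivity
  · simp
  · simp
  · simp only [Finset.sum_apply, Pi.smul_apply, smul_eq_mul, detBox]
    exact Finset.sum_congr rfl fun l _ => by split_ifs <;> simp_all

theorem isQuantumBox_of_isLocalBox {N m v : ℕ} {p : Fin m → Fin m → Fin v → Fin v → ℝ}
    (h : IsLocalBox N m v p) : IsQuantumBox N m v p := by
  obtain ⟨w, f, g, hw, hw1, hf, hg, hf1, hg1, hp⟩ := h
  refine ⟨diagonal fun q => if q.1 = q.2 then (w q.1 : ℂ) else 0,
    fun x a => diagonal fun l => (f l x a : ℂ), fun y b => diagonal fun l => (g l y b : ℂ),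
    ?_, ?_, ?_, ?_, ?_, ?_, ?_⟩
  · simp only [posSemidef_diagonal_iff, Prod.forall]
    intro i j
    split_ifs <;> simp [hw]
  · simp [trace_diagonal, Fintype.sum_prod_type]
    exact_mod_cast hw1
  · simp [posSemidef_diagonal_iff, hf]
  · intro x
    ext i j
    by_cases hij : i = j <;> simp [Matrix.sum_apply, one_apply, hij, ← Complex.ofReal_sum, hf1]
  · simp [posSemidef_diagonal_iff, hg]
  · intro y
    ext i j
    by_cases hij : i = j <;> simp [Matrix.sum_apply, one_apply, hij, ← Complex.ofReal_sum, hg1]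
  · simp [hp, diagonal_kronecker_diagonal, trace_diagonal, Fintype.sum_prod_type, mul_assoc]

theorem isQuantumBox_two_smul_add_smul_detBox {m v : ℕ} {c c' : ℝ} (hc : 0 ≤ c) (hc' : 0 ≤ c')
    (h : c + c' = 1) (s t s' t' : Fin m → Fin v) :
    IsQuantumBox 2 m v (c • detBox s t + c' • detBox s' t') :=
  isQuantumBox_of_isLocalBox <| by
    simpa [Fin.sum_univ_two] using isLocalBox_sum_smul_detBox (w := ![c, c'])
      (by simp [Fin.forall_fin_two, hc, hc']) (by simpa [Fin.sum_univ_two]) ![s, s'] ![t, t']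

theorem isQuantumBox_mix_of_eq_zero {c1 c3 c4 : ℝ} (h1 : 0 ≤ c1) (h3 : 0 ≤ c3) (h4 : 0 ≤ c4)
    (hc : c1 + c3 + c4 = 1) (h0 : c1 = 0 ∨ c3 = 0 ∨ c4 = 0) :
    IsQuantumBox 2 2 2 (c1 • P1 + c3 • P3 + c4 • P4) := by
  -- `P1`, `P3` and `P4` are `detBox`es by definition.
  rcases h0 with rfl | rfl | rfl
  · rw [zero_smul, zero_add]
    exact isQuantumBox_two_smul_add_smul_detBox h3 h4 (by linarith) _ _ _ _
  · rw [zero_smul, add_zero]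
    exact isQuantumBox_two_smul_add_smul_detBox h1 h4 (by linarith) _ _ _ _
  · rw [zero_smul, add_zero]
    exact isQuantumBox_two_smul_add_smul_detBox h1 h3 (by linarith) _ _ _ _

theorem not_isQuantumBox_mix {c1 c3 c4 : ℝ} (h1 : c1 ≠ 0) (h3 : c3 ≠ 0) (h4 : c4 ≠ 0) :
    ¬ IsQuantumBox 2 2 2 (c1 • P1 + c3 • P3 + c4 • P4) := by
  rintro ⟨ρ, A, B, hρ, -, hA, hAsum, hB, hBsum, hp⟩
  have hAmarg : ∀ x a y, (ρ * (A x a ⊗ₖ 1)).trace = ∑ b, (ρ * (A x a ⊗ₖ B y b)).trace :=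
    fun x a y => by rw [← hBsum y, kronecker_sum, Matrix.mul_sum, trace_sum]
  have hBmarg : ∀ y b x, (ρ * (1 ⊗ₖ B y b)).trace = ∑ a, (ρ * (A x a ⊗ₖ B y b)).trace :=
    fun y b x => by rw [← hAsum x, sum_kronecker, Matrix.mul_sum, trace_sum]
  obtain ⟨u, hu, hBu⟩ := exists_ne_zero_mulVec_eq_zero_of_trace_mul_kronecker_eq_zero hρ (hA 0 0)
    (by simp [hAmarg 0 0 1, hp, P1, P3, P4, h4])
  obtain ⟨u', hu', hBu'⟩ := exists_ne_zero_mulVec_eq_zero_of_trace_mul_kronecker_eq_zero hρ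
    (hA 1 0) (by simp [hAmarg 1 0 0, hp, P1, P3, P4, h3])
  have hB01u := hBu (B 0 1) (hB 0 1) (by simp [hp, P1, P3, P4])
  have hB10u := hBu (B 1 0) (hB 1 0) (by simp [hp, P1, P3, P4])
  have hB00u' := hBu' (B 0 0) (hB 0 0) (by simp [hp, P1, P3, P4])
  have hB11u' := hBu' (B 1 1) (hB 1 1) (by simp [hp, P1, P3, P4])
  have hBu_add : ∀ y, B y 0 *ᵥ u + B y 1 *ᵥ u = u := fun y => by
    rw [← add_mulVec, ← Fin.sum_univ_two, hBsum, one_mulVec]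
  have hBB : B 0 0 = B 1 1 := eq_of_eq_on_eigenvectors_of_card_eq_two (Fintype.card_fin 2) hu hu'
    (by simpa [hB01u] using hBu_add 0) (by simpa [hB10u] using hBu_add 1) hB00u' hB11u'
  have hB00 : (ρ * (1 ⊗ₖ B 0 0)).trace = (c4 : ℂ) := by simp [hBmarg 0 0 0, hp, P1, P3, P4]
  have hB11 : (ρ * (1 ⊗ₖ B 1 1)).trace = ((c4 + c1 : ℝ) : ℂ) := by
    simp [hBmarg 1 1 0, hp, P1, P3, P4]
  rw [hBB, hB11] at hB00
  exact h1 (by simpa using hB00)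

/-- `P1, P3, P4 ∈ Q_2`, a mixture `c1•P1 + c3•P3 + c4•P4` is in `Q_2`
iff one of the weights vanishes, and consequently `Q_2` is not convex in the
(2,2,2) scenario. -/
theorem triangle_134_nonconvexity :
    IsQuantumBox 2 2 2 P1 ∧ IsQuantumBox 2 2 2 P3 ∧ IsQuantumBox 2 2 2 P4 ∧
    (∀ c1 c3 c4 : ℝ, 0 ≤ c1 → 0 ≤ c3 → 0 ≤ c4 → c1 + c3 + c4 = 1 →
      (IsQuantumBox 2 2 2 (c1 • P1 + c3 • P3 + c4 • P4) ↔
        (c1 = 0 ∨ c3 = 0 ∨ c4 = 0))) ∧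
    ¬ Convex ℝ {p : Fin 2 → Fin 2 → Fin 2 → Fin 2 → ℝ | IsQuantumBox 2 2 2 p} := by
  have hmix : ∀ c1 c3 c4 : ℝ, 0 ≤ c1 → 0 ≤ c3 → 0 ≤ c4 → c1 + c3 + c4 = 1 →
      (IsQuantumBox 2 2 2 (c1 • P1 + c3 • P3 + c4 • P4) ↔ (c1 = 0 ∨ c3 = 0 ∨ c4 = 0)) :=
    fun c1 c3 c4 h1 h3 h4 hc =>
      ⟨fun hq => by
        by_contra! h
        exact not_isQuantumBox_mix h.1 h.2.1 h.2.2 hq,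
      isQuantumBox_mix_of_eq_zero h1 h3 h4 hc⟩
  refine ⟨by simpa using (hmix 1 0 0 (by norm_num) le_rfl le_rfl (by norm_num)).2 (by simp),
    by simpa using (hmix 0 1 0 le_rfl (by norm_num) le_rfl (by norm_num)).2 (by simp),
    by simpa using (hmix 0 0 1 le_rfl le_rfl (by norm_num) (by norm_num)).2 (by simp),
    hmix, fun hconv => ?_⟩
  have hmid := hconv
    ((hmix (2 / 3) (1 / 3) 0 (by norm_num) (by norm_num) le_rfl (by norm_num)).2 (by simp))
    ((hmix 0 (1 / 3) (2 / 3) le_rfl (by norm_num) (by norm_num) (by norm_num)).2 (by simp))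
    (by norm_num : (0 : ℝ) ≤ 1 / 2) (by norm_num : (0 : ℝ) ≤ 1 / 2) (by norm_num)
  rw [show (1 / 2 : ℝ) • ((2 / 3 : ℝ) • P1 + (1 / 3 : ℝ) • P3 + (0 : ℝ) • P4) +
      (1 / 2 : ℝ) • ((0 : ℝ) • P1 + (1 / 3 : ℝ) • P3 + (2 / 3 : ℝ) • P4) =
      (1 / 3 : ℝ) • P1 + (1 / 3 : ℝ) • P3 + (1 / 3 : ℝ) • P4 by module] at hmid
  rcases (hmix _ _ _ (by norm_num) (by norm_num) (by norm_num) (by norm_num)).1 hmid with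
    h | h | h <;> norm_num at h
end

section
/- In the (2,2,2) scenario, the box P14 (defined by P14 x y a b = 1/2 if x = y and a = b, 0 if x = y and a ≠ b, and 1/4 if x ≠ y) belongs to Q_2. Explicitly, let ρ = |Φ⁺⟩⟨Φ⁺| be the rank-one density matrix on ℂ² ⊗ ℂ² associated with the unit vector Φ⁺ = (|00⟩ + |11⟩)/√2, and for each party define the projective measurements A x a = B x a = (1/2) • (1 + (-1)^(a+1) • σ_x'), where σ_0' = σZ (the Pauli Z matrix) and σ_1' = σX (the Pauli X matrix); then each A x a is positive semidefinite, ∑_a A x a = 1, and for all x, y, a, b the trace of ρ * (A x a ⊗ₖ B y b) equals P14 x y a b. -/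
open Matrix Kronecker ComplexOrder

/-- The box `P14`: perfectly correlated on equal inputs, uniformly random otherwise. -/
noncomputable def P14 : Fin 2 → Fin 2 → Fin 2 → Fin 2 → ℝ :=
  fun x y a b => if x = y then (if a = b then 1 / 2 else 0) else 1 / 4

/-- The unit vector `Φ⁺ = (|00⟩ + |11⟩)/√2`. -/
noncomputable def phiPlus : Fin 2 × Fin 2 → ℂ :=
  fun i => if i.1 = i.2 then ((1 / Real.sqrt 2 : ℝ) : ℂ) else 0

/-- The rank-one density matrix `|Φ⁺⟩⟨Φ⁺|`. -/
noncomputable def rhoPhiPlus : Matrix ((Fin 2) × (Fin 2)) ((Fin 2) × (Fin 2)) ℂ :=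
  Matrix.vecMulVec phiPlus (star phiPlus)

/-- The Pauli `Z` matrix. -/
def sigmaZ : Matrix (Fin 2) (Fin 2) ℂ := !![1, 0; 0, -1]

/-- The Pauli `X` matrix. -/
def sigmaX : Matrix (Fin 2) (Fin 2) ℂ := !![0, 1; 1, 0]

/-- The observable for input `x`: `σZ` for `x = 0` and `σX` for `x = 1`. -/
def sigma' : Fin 2 → Matrix (Fin 2) (Fin 2) ℂ := ![sigmaZ, sigmaX]

/-- The projective measurement elements `A x a = (1/2)(1 + (-1)^(a+1) σ'_x)`. -/
noncomputable def Ameas : Fin 2 → Fin 2 → Matrix (Fin 2) (Fin 2) ℂ :=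
  fun x a => (1 / 2 : ℂ) • ((1 : Matrix (Fin 2) (Fin 2) ℂ)
    + ((-1 : ℂ) ^ ((a : ℕ) + 1)) • sigma' x)

/-!
Each `Ameas x a` is `(1 ± σ)/2` for a self-adjoint involution `σ`, hence a star projection and
positive. For the maximally entangled state, `tr(|Φ⁺⟩⟨Φ⁺| (A ⊗ B)) = tr(A Bᵀ)/2`; since `σZ`, `σX`
are symmetric, traceless and `tr(σ'_x σ'_y) = 2 δ_{xy}`, the correlations come out as
`(1 + (-1)^(a+b) δ_{xy})/4`, which is `P14`.
-/

open scoped MatrixOrder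

theorem isStarProjection_half_smul_one_add {A : Type*} [Ring A] [StarRing A] [Algebra ℂ A]
    [StarModule ℂ A] {τ : A} (hτ : IsSelfAdjoint τ) (hττ : τ * τ = 1) :
    IsStarProjection ((1 / 2 : ℂ) • (1 + τ)) := by
  refine ⟨?_, ?_⟩
  · have : (1 + τ) * (1 + τ) = (2 : ℂ) • (1 + τ) := by
      simp only [add_mul, mul_add, one_mul, mul_one, hττ, two_smul]; abel
    rw [IsIdempotentElem, smul_mul_smul_comm, this, smul_smul]; norm_num
  · rw [IsSelfAdjoint, star_smul, star_add, star_one, hτ.star_eq]; norm_num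

theorem trace_half_smul_one_add_mul {n : Type*} [Fintype n] [DecidableEq n]
    {σ τ : Matrix n n ℂ} (hσ : σ.trace = 0) (hτ : τ.trace = 0) :
    ((1 / 2 : ℂ) • (1 + σ) * (1 / 2 : ℂ) • (1 + τ)).trace =
      (Fintype.card n + (σ * τ).trace) / 4 := by
  simp only [smul_mul_smul_comm, add_mul, mul_add, one_mul, mul_one, trace_smul, trace_add,
    trace_one, hσ, hτ, smul_eq_mul]
  ring

theorem trace_vecMulVec_mul {n R : Type*} [Fintype n] [CommSemiring R] (u v : n → R)
    (M : Matrix n n R) :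
    (vecMulVec u v * M).trace = v ᵥ* M ⬝ᵥ u := by
  rw [vecMulVec_mul, trace_vecMulVec, dotProduct_comm]

theorem trace_rhoPhiPlus_mul_kronecker (A B : Matrix (Fin 2) (Fin 2) ℂ) :
    (rhoPhiPlus * (A ⊗ₖ B)).trace = (A * Bᵀ).trace / 2 := by
  have h : ((Real.sqrt 2 : ℝ) : ℂ)⁻¹ * ((Real.sqrt 2 : ℝ) : ℂ)⁻¹ = 1 / 2 := by
    rw [← mul_inv, ← Complex.ofReal_mul, Real.mul_self_sqrt zero_le_two]; norm_num
  rw [rhoPhiPlus, trace_vecMulVec_mul]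
  simp only [dotProduct, vecMul, Pi.star_apply, phiPlus, one_div, Complex.ofReal_inv,
    RCLike.star_def, kroneckerMap_apply, Fintype.sum_prod_type, Fin.sum_univ_two, Fin.isValue,
    ↓reduceIte, map_inv₀, Complex.conj_ofReal, zero_ne_one, map_zero, zero_mul, add_zero,
    one_ne_zero, zero_add, mul_ite, mul_zero, Finset.sum_ite_eq, Finset.mem_univ, trace_fin_two,
    mul_apply, transpose_apply]
  linear_combination (A 0 0 * B 0 0 + A 0 1 * B 0 1 + A 1 0 * B 1 0 + A 1 1 * B 1 1) * h

theorem rhoPhiPlus_trace : rhoPhiPlus.trace = 1 := by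
  have h := trace_rhoPhiPlus_mul_kronecker 1 1
  rw [one_kronecker_one, mul_one, transpose_one, mul_one, trace_one] at h
  rw [h]; norm_num

theorem sigma'_isSelfAdjoint (x : Fin 2) : IsSelfAdjoint (sigma' x) := by
  fin_cases x <;> ext i j <;> fin_cases i <;> fin_cases j <;> simp [sigma', sigmaZ, sigmaX]

theorem sigma'_mul_self (x : Fin 2) : sigma' x * sigma' x = 1 := by
  fin_cases x <;> simp [sigma', sigmaZ, sigmaX, one_fin_two]

theorem transpose_sigma' (x : Fin 2) : (sigma' x)ᵀ = sigma' x := by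
  fin_cases x <;> ext i j <;> fin_cases i <;> fin_cases j <;> simp [sigma', sigmaZ, sigmaX]

theorem trace_sigma' (x : Fin 2) : (sigma' x).trace = 0 := by
  fin_cases x <;> simp [sigma', sigmaZ, sigmaX, trace_fin_two]

theorem trace_sigma'_mul_sigma' (x y : Fin 2) :
    (sigma' x * sigma' y).trace = if x = y then 2 else 0 := by
  fin_cases x <;> fin_cases y <;> simp [sigma', sigmaZ, sigmaX, trace_fin_two] <;> norm_num

theorem transpose_Ameas (x a : Fin 2) : (Ameas x a)ᵀ = Ameas x a := by
  simp [Ameas, transpose_sigma']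

theorem Ameas_isStarProjection (x a : Fin 2) : IsStarProjection (Ameas x a) := by
  refine isStarProjection_half_smul_one_add (IsSelfAdjoint.smul ?_ (sigma'_isSelfAdjoint x)) ?_
  · simp [IsSelfAdjoint]
  · rw [smul_mul_smul_comm, sigma'_mul_self, ← pow_add, ← two_mul, pow_mul]
    norm_num

theorem Ameas_posSemidef (x a : Fin 2) : (Ameas x a).PosSemidef :=
  (Ameas_isStarProjection x a).nonneg.posSemidef

theorem sum_Ameas (x : Fin 2) : ∑ a, Ameas x a = 1 := by
  simp only [Fin.sum_univ_two, Ameas, Fin.val_zero, Fin.val_one]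
  module

theorem neg_one_pow_mul_neg_one_pow (a b : Fin 2) :
    (-1 : ℂ) ^ ((a : ℕ) + 1) * (-1) ^ ((b : ℕ) + 1) = if a = b then 1 else -1 := by
  fin_cases a <;> fin_cases b <;> norm_num

theorem trace_rhoPhiPlus_mul_Ameas_kronecker (x y a b : Fin 2) :
    (rhoPhiPlus * (Ameas x a ⊗ₖ Ameas y b)).trace = (P14 x y a b : ℂ) := by
  rw [trace_rhoPhiPlus_mul_kronecker, transpose_Ameas, Ameas, Ameas,
    trace_half_smul_one_add_mul (by rw [trace_smul, trace_sigma', smul_zero])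
      (by rw [trace_smul, trace_sigma', smul_zero]),
    smul_mul_smul_comm, trace_smul, trace_sigma'_mul_sigma', neg_one_pow_mul_neg_one_pow, P14]
  split_ifs <;> norm_num

/-- `P14` belongs to `Q_2`, realized explicitly by the maximally
entangled state `|Φ⁺⟩⟨Φ⁺|` with `σZ`/`σX` projective measurements. -/
theorem P14_in_Q2_explicit :
    rhoPhiPlus.PosSemidef ∧ rhoPhiPlus.trace = 1 ∧
    (∀ x a, (Ameas x a).PosSemidef) ∧ (∀ x, ∑ a, Ameas x a = 1) ∧
    (∀ x y a b,
      (rhoPhiPlus * (Ameas x a ⊗ₖ Ameas y b)).trace = (P14 x y a b : ℂ)) ∧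
    IsQuantumBox 2 2 2 P14 := by
  have hρ : rhoPhiPlus.PosSemidef := posSemidef_vecMulVec_self_star phiPlus
  exact ⟨hρ, rhoPhiPlus_trace, Ameas_posSemidef, sum_Ameas, trace_rhoPhiPlus_mul_Ameas_kronecker,
    rhoPhiPlus, Ameas, Ameas, hρ, rhoPhiPlus_trace, Ameas_posSemidef, sum_Ameas,
    Ameas_posSemidef, sum_Ameas, trace_rhoPhiPlus_mul_Ameas_kronecker⟩
end

section
/- In the (2,2,2) scenario, the box P14 (defined by P14 x y a b = 1/2 if x = y and a = b, 0 if x = y and a ≠ b, and 1/4 if x ≠ y) does not belong to L_3: there do not exist a nonnegative weight w : Fin 3 → ℝ with ∑_λ w λ = 1 and nonnegative response functions f g : Fin 3 → Fin 2 → Fin 2 → ℝ with ∑_a f λ x a = 1 and ∑_b g λ y b = 1 such that P14 x y a b = ∑_λ w λ * f λ x a * g λ y b for all x, y, a, b. Hence P14 classically requires shared randomness of dimension at least 4, even though it is quantumly achievable with qubits (local dimension 2). -/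
open Matrix Kronecker ComplexOrder

/-!
If `p` is perfectly correlated on equal inputs, every hidden variable `λ` of positive weight
answers input `x` deterministically on both sides: `f λ x a > 0` forces `g λ x b = 0` for all
`b ≠ a`. Hence, for a pair of inputs `x, y` on which all `v²` outcome pairs have positive
probability, distinct outcome pairs are produced by distinct hidden variables, so `v² ≤ N`.
For `P14` this gives `4 ≤ N`. The quantum realization measures the maximally entangled qubit
pair in the `Z` basis on input `0` and in the `X` basis on input `1`.
-/

section WeightedSums

variable {ι : Type*} [Fintype ι] {w F G : ι → ℝ}

theorem mul_eq_zero_of_weighted_sum_eq_zero (hw : ∀ l, 0 ≤ w l) (hF : ∀ l, 0 ≤ F l)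
    (hG : ∀ l, 0 ≤ G l) (h : ∑ l, w l * F l * G l = 0) {l : ι} (hl : 0 < w l) :
    F l * G l = 0 := by
  have hterm := (Finset.sum_eq_zero_iff_of_nonneg fun i _ =>
    mul_nonneg (mul_nonneg (hw i) (hF i)) (hG i)).1 h l (Finset.mem_univ l)
  rw [mul_assoc] at hterm
  exact (mul_eq_zero.1 hterm).resolve_left hl.ne'

theorem exists_pos_of_weighted_sum_pos (hw : ∀ l, 0 ≤ w l) (hF : ∀ l, 0 ≤ F l)
    (hG : ∀ l, 0 ≤ G l) (h : 0 < ∑ l, w l * F l * G l) :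
    ∃ l, 0 < w l ∧ 0 < F l ∧ 0 < G l := by
  obtain ⟨l, -, hl⟩ :=
    Finset.exists_lt_of_sum_lt (s := Finset.univ) (f := fun _ => (0 : ℝ)) (by simpa using h)
  have hne : w l * F l * G l ≠ 0 := hl.ne'
  simp only [mul_ne_zero_iff] at hne
  exact ⟨l, (hw l).lt_of_ne' hne.1.1, (hF l).lt_of_ne' hne.1.2, (hG l).lt_of_ne' hne.2⟩

end WeightedSums

theorem eq_of_pos_of_mul_eq_zero {α : Type*} [Fintype α] {f g : α → ℝ} (hg : ∑ b, g b = 1)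
    (hfg : ∀ a b, a ≠ b → f a * g b = 0) {a a' : α} (ha : 0 < f a) (ha' : 0 < f a') :
    a = a' := by
  by_contra hne
  have hg0 : ∀ b, g b = 0 := fun b => by
    by_cases hb : a = b
    · subst hb
      exact (mul_eq_zero.1 (hfg a' a (Ne.symm hne))).resolve_left ha'.ne'
    · exact (mul_eq_zero.1 (hfg a b hb)).resolve_left ha.ne'
  simp [hg0] at hg

theorem IsLocalBox.sq_le {N m v : ℕ} {p : Fin m → Fin m → Fin v → Fin v → ℝ}
    (hp : IsLocalBox N m v p) (hcorr : ∀ x a b, a ≠ b → p x x a b = 0) {x y : Fin m}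
    (hpos : ∀ a b, 0 < p x y a b) : v ^ 2 ≤ N := by
  obtain ⟨w, f, g, hw, -, hf, hg, hf1, hg1, hp⟩ := hp
  have hanti : ∀ l z a b, 0 < w l → a ≠ b → f l z a * g l z b = 0 := fun l z a b hl hab =>
    mul_eq_zero_of_weighted_sum_eq_zero hw (hf · z a) (hg · z b)
      (hp z z a b ▸ hcorr z a b hab) hl
  choose lam hlam using fun ab : Fin v × Fin v =>
    exists_pos_of_weighted_sum_pos hw (hf · x ab.1) (hg · y ab.2)
      (hp x y ab.1 ab.2 ▸ hpos ab.1 ab.2)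
  have hinj : Function.Injective lam := by
    rintro ⟨a, b⟩ ⟨a', b'⟩ h
    obtain ⟨hw, hfa, hgb⟩ := hlam (a, b)
    obtain ⟨-, hfa', hgb'⟩ := hlam (a', b')
    rw [← h] at hfa' hgb'
    exact Prod.ext (eq_of_pos_of_mul_eq_zero (hg1 _ x) (hanti _ x · · hw) hfa hfa')
      (eq_of_pos_of_mul_eq_zero (hf1 _ y)
        (fun b b' hbb' => (mul_comm _ _).trans (hanti _ y b' b hw hbb'.symm)) hgb hgb')
  simpa [sq] using Fintype.card_le_of_injective lam hinj

theorem P14_eq_zero_of_ne (x : Fin 2) {a b : Fin 2} (hab : a ≠ b) : P14 x x a b = 0 := by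
  simp [P14, hab]

theorem P14_zero_one_pos (a b : Fin 2) : 0 < P14 0 1 a b := by
  norm_num [P14]

theorem not_isLocalBox_three_P14 : ¬ IsLocalBox 3 2 2 P14 := fun h => by
  have := h.sq_le P14_eq_zero_of_ne P14_zero_one_pos
  norm_num at this

def maxEntangledVec (d : ℕ) : Fin d × Fin d → ℂ := fun i => if i.1 = i.2 then 1 else 0

noncomputable def maxEntangled (d : ℕ) : Matrix (Fin d × Fin d) (Fin d × Fin d) ℂ :=
  (d : ℂ)⁻¹ • vecMulVec (maxEntangledVec d) (star (maxEntangledVec d))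

theorem maxEntangled_posSemidef (d : ℕ) : (maxEntangled d).PosSemidef :=
  (posSemidef_vecMulVec_self_star _).smul (by positivity)

theorem trace_maxEntangled {d : ℕ} (hd : d ≠ 0) : (maxEntangled d).trace = 1 := by
  simp [maxEntangled, maxEntangledVec, Matrix.trace, vecMulVec_apply, Fintype.sum_prod_type, hd]

theorem trace_maxEntangled_mul_kronecker {d : ℕ} (P Q : Matrix (Fin d) (Fin d) ℂ) :
    (maxEntangled d * (P ⊗ₖ Q)).trace = (d : ℂ)⁻¹ * ∑ i, ∑ j, P i j * Q i j := by
  rw [Finset.sum_comm]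
  simp [maxEntangled, maxEntangledVec, Matrix.trace, Matrix.mul_apply, vecMulVec_apply,
    Fintype.sum_prod_type, Finset.mul_sum]

noncomputable def zxMeasurement : Fin 2 → Fin 2 → Matrix (Fin 2) (Fin 2) ℂ :=
  ![![!![1, 0; 0, 0], !![0, 0; 0, 1]], ![!![1/2, 1/2; 1/2, 1/2], !![1/2, -1/2; -1/2, 1/2]]]

theorem zxMeasurement_eq_conjTranspose_mul_self (x a : Fin 2) :
    zxMeasurement x a = (zxMeasurement x a)ᴴ * zxMeasurement x a := by
  fin_cases x <;> fin_cases a <;>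
    · ext i j
      fin_cases i <;> fin_cases j <;>
        norm_num [zxMeasurement, Matrix.mul_apply, Fin.sum_univ_two, Matrix.conjTranspose_apply,
          map_ofNat]

theorem zxMeasurement_posSemidef (x a : Fin 2) : (zxMeasurement x a).PosSemidef := by
  rw [zxMeasurement_eq_conjTranspose_mul_self]
  exact posSemidef_conjTranspose_mul_self _

theorem sum_zxMeasurement (x : Fin 2) : ∑ a, zxMeasurement x a = 1 := by
  fin_cases x <;>
    · ext i j
      fin_cases i <;> fin_cases j <;> norm_num [zxMeasurement, Fin.sum_univ_two, Matrix.one_apply]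

theorem trace_maxEntangled_mul_zxMeasurement (x y a b : Fin 2) :
    (maxEntangled 2 * (zxMeasurement x a ⊗ₖ zxMeasurement y b)).trace = (P14 x y a b : ℂ) := by
  rw [trace_maxEntangled_mul_kronecker]
  fin_cases x <;> fin_cases y <;> fin_cases a <;> fin_cases b <;>
    norm_num [zxMeasurement, P14, Fin.sum_univ_two]

theorem isQuantumBox_two_P14 : IsQuantumBox 2 2 2 P14 :=
  ⟨maxEntangled 2, zxMeasurement, zxMeasurement, maxEntangled_posSemidef 2,
    trace_maxEntangled two_ne_zero, zxMeasurement_posSemidef, sum_zxMeasurement,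
    zxMeasurement_posSemidef, sum_zxMeasurement, trace_maxEntangled_mul_zxMeasurement⟩

/-- `P14` is not achievable with shared classical randomness of
dimension `3` (so it requires `|λ| ≥ 4` classically), even though it is quantumly
achievable with qubits. -/
theorem P14_not_in_L3_but_in_Q2 :
    (¬ ∃ (w : Fin 3 → ℝ) (f g : Fin 3 → Fin 2 → Fin 2 → ℝ),
        (∀ l, 0 ≤ w l) ∧ (∑ l, w l = 1) ∧
        (∀ l x a, 0 ≤ f l x a) ∧ (∀ l y b, 0 ≤ g l y b) ∧
        (∀ l x, ∑ a, f l x a = 1) ∧ (∀ l y, ∑ b, g l y b = 1) ∧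
        ∀ x y a b, P14 x y a b = ∑ l, w l * f l x a * g l y b) ∧
    IsQuantumBox 2 2 2 P14 :=
  ⟨not_isLocalBox_three_P14, isQuantumBox_two_P14⟩
end

section
/- For all d, N, m, v ≥ 1: if p_i ∈ Q_d for each i : Fin N are (2,m,v) boxes and c : Fin N → ℝ is nonnegative with ∑_i c i = 1, then the convex combination ∑_i c i • p_i belongs to Q_{d·N}. That is, any hybrid quantum-classical box using local quantum dimension d assisted by shared randomness of dimension N is a purely quantum box of local dimension d·N (via a block-diagonal classical-quantum state on the direct sum of the component Hilbert spaces). -/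
open Matrix Kronecker ComplexOrder

section MixAux

/-- diagonal flag matrix -/
noncomputable def mixE {N : ℕ} (l : Fin N) : Matrix (Fin N) (Fin N) ℂ :=
  Matrix.single l l 1

/-- index equivalence -/
def mixe (d N : ℕ) : Fin d × Fin N ≃ Fin (d * N) := finProdFinEquiv

/-- index shuffle -/
def mixσ (d N : ℕ) : Fin (d * N) × Fin (d * N) ≃ (Fin d × Fin d) × (Fin N × Fin N) :=
  ((mixe d N).symm.prodCongr (mixe d N).symm).trans
    (Equiv.prodProdProdComm (Fin d) (Fin N) (Fin d) (Fin N))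

variable {d N : ℕ}

lemma kron_conjTranspose' {m n p q : Type*} (A : Matrix m n ℂ) (B : Matrix p q ℂ) :
    (A ⊗ₖ B)ᴴ = Aᴴ ⊗ₖ Bᴴ := by
  ext ⟨i, j⟩ ⟨k, l⟩
  simp [conjTranspose_apply, kroneckerMap_apply]

lemma kron_posSemidef {m p : Type*} [Fintype m] [Fintype p] [DecidableEq m] [DecidableEq p]
    {A : Matrix m m ℂ} {B : Matrix p p ℂ} (hA : A.PosSemidef) (hB : B.PosSemidef) :
    (A ⊗ₖ B).PosSemidef := by
  exact hA.kronecker hB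

lemma smul_posSemidef {n : Type*} [Fintype n] {c : ℝ} (hc : 0 ≤ c)
    {M : Matrix n n ℂ} (hM : M.PosSemidef) : ((c : ℂ) • M).PosSemidef := by
  refine ⟨?_, fun x => ?_⟩
  · unfold Matrix.IsHermitian
    rw [conjTranspose_smul, hM.1.eq]
    simp
  · exact (hM.smul (a := (c : ℂ)) (by exact_mod_cast hc)).2 x

lemma mixE_posSemidef (l : Fin N) : (mixE l).PosSemidef := by
  have h : (mixE l)ᴴ = mixE l := by
    ext a b
    simp [mixE, conjTranspose_apply, Matrix.single, Matrix.of_apply, and_comm,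
      apply_ite (starRingEnd ℂ)]
  have key : mixE l = (mixE l)ᴴ * mixE l := by
    rw [h, mixE, Matrix.single_mul_single_same, mul_one]
  rw [key]
  exact posSemidef_conjTranspose_mul_self _

lemma psd_sum {n ι : Type*} [Fintype n] (s : Finset ι) (f : ι → Matrix n n ℂ)
    (h : ∀ i ∈ s, (f i).PosSemidef) : (∑ i ∈ s, f i).PosSemidef :=
  Finset.sum_induction f (fun M => M.PosSemidef) (fun _ _ ha hb => ha.add hb)
    Matrix.PosSemidef.zero h

lemma trace_submatrix_equiv' {n m : Type*} [Fintype n] [Fintype m] (σ : m ≃ n)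
    (M : Matrix n n ℂ) : (M.submatrix σ σ).trace = M.trace := by
  simp only [Matrix.trace, Matrix.diag, Matrix.submatrix_apply]
  exact Fintype.sum_equiv σ _ _ fun i => rfl

lemma sum_kronecker {ι m n p q : Type*} (s : Finset ι) (f : ι → Matrix m n ℂ)
    (B : Matrix p q ℂ) : (∑ i ∈ s, f i) ⊗ₖ B = ∑ i ∈ s, f i ⊗ₖ B := by
  ext ⟨i, j⟩ ⟨k, l⟩
  simp [Matrix.sum_apply, kroneckerMap_apply, Finset.sum_mul]

lemma kronecker_sum {ι m n p q : Type*} (s : Finset ι) (A : Matrix m n ℂ)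
    (f : ι → Matrix p q ℂ) : A ⊗ₖ (∑ i ∈ s, f i) = ∑ i ∈ s, A ⊗ₖ f i := by
  ext ⟨i, j⟩ ⟨k, l⟩
  simp [Matrix.sum_apply, kroneckerMap_apply, Finset.mul_sum]

lemma sum_mixE : ∑ l : Fin N, mixE l = 1 := by
  ext a b
  simp only [mixE, Matrix.sum_apply, Matrix.single, Matrix.of_apply, Matrix.one_apply,
    ite_and]
  simp [Finset.sum_ite_eq, eq_comm]

lemma trace_mixE (l : Fin N) : (mixE l).trace = 1 := by
  rw [mixE, Matrix.trace]
  simp only [Matrix.diag_apply, Matrix.single, Matrix.of_apply, and_self]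
  simp

lemma trace_mixE_mul (l j : Fin N) :
    (mixE l * mixE j).trace = if l = j then 1 else 0 := by
  by_cases h : l = j
  · subst h
    rw [mixE, Matrix.single_mul_single_same, mul_one, if_pos rfl, Matrix.trace]
    simp only [Matrix.diag_apply, Matrix.single, Matrix.of_apply, and_self]
    simp
  · rw [mixE, mixE, Matrix.single_mul_single_of_ne (h := h), if_neg h, Matrix.trace_zero]

lemma submatrix_sum' {ι m n p q : Type*} (s : Finset ι) (f : ι → Matrix m n ℂ)
    (g : p → m) (h : q → n) :
    ∑ i ∈ s, (f i).submatrix g h = (∑ i ∈ s, f i).submatrix g h := by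
  ext a b
  simp [Matrix.sum_apply]

/-- the shuffled Kronecker identity -/
lemma mix_kron_eq (X Y : Fin N → Matrix (Fin d) (Fin d) ℂ) :
    ((∑ j, X j ⊗ₖ mixE j).submatrix (mixe d N).symm (mixe d N).symm) ⊗ₖ
      ((∑ k, Y k ⊗ₖ mixE k).submatrix (mixe d N).symm (mixe d N).symm)
    = (∑ j, ∑ k, (X j ⊗ₖ Y k) ⊗ₖ (mixE j ⊗ₖ mixE k)).submatrix (mixσ d N) (mixσ d N) := by
  ext ⟨u, w⟩ ⟨u', w'⟩
  simp only [Matrix.submatrix_apply, kroneckerMap_apply, Matrix.sum_apply, mixσ,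
    Equiv.trans_apply, Equiv.prodCongr_apply, Equiv.prodProdProdComm_apply, Prod.map]
  rw [Finset.sum_mul_sum]
  refine Finset.sum_congr rfl fun j _ => Finset.sum_congr rfl fun k _ => ?_
  ring

/-- key trace computation -/
lemma mix_trace_key (ρl : Matrix ((Fin d) × (Fin d)) ((Fin d) × (Fin d)) ℂ)
    (X Y : Fin N → Matrix (Fin d) (Fin d) ℂ) (l : Fin N) :
    (((ρl ⊗ₖ (mixE l ⊗ₖ mixE l)).submatrix (mixσ d N) (mixσ d N)) *
      (((∑ j, X j ⊗ₖ mixE j).submatrix (mixe d N).symm (mixe d N).symm) ⊗ₖ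
        ((∑ k, Y k ⊗ₖ mixE k).submatrix (mixe d N).symm (mixe d N).symm))).trace
    = (ρl * (X l ⊗ₖ Y l)).trace := by
  rw [mix_kron_eq, Matrix.submatrix_mul_equiv, trace_submatrix_equiv']
  simp only [Finset.mul_sum, Matrix.trace_sum]
  have hterm : ∀ j k : Fin N,
      ((ρl ⊗ₖ (mixE l ⊗ₖ mixE l)) * ((X j ⊗ₖ Y k) ⊗ₖ (mixE j ⊗ₖ mixE k))).trace
      = if l = j then (if l = k then (ρl * (X l ⊗ₖ Y l)).trace else 0) else 0 := by
    intro j k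
    rw [← mul_kronecker_mul, ← mul_kronecker_mul, Matrix.trace_kronecker,
      Matrix.trace_kronecker, trace_mixE_mul, trace_mixE_mul]
    by_cases h1 : l = j <;> by_cases h2 : l = k
    · subst h1; subst h2; simp
    · subst h1; simp [h2]
    · subst h2; simp [h1]
    · simp [h1, h2]
  simp only [hterm]
  simp

end MixAux

/-- a convex mixture of `N` boxes in `Q_d` belongs to `Q_{d·N}`:
hybrid quantum-classical boxes embed into purely quantum boxes of larger
local dimension. -/
theorem mixture_of_Qd_in_QdN (d N m v : ℕ)
    (hd : 1 ≤ d) (hN : 1 ≤ N) (hm : 1 ≤ m) (hv : 1 ≤ v)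
    (p : Fin N → (Fin m → Fin m → Fin v → Fin v → ℝ))
    (hp : ∀ i, IsQuantumBox d m v (p i))
    (c : Fin N → ℝ) (hc : ∀ i, 0 ≤ c i) (hc1 : ∑ i, c i = 1) :
    IsQuantumBox (d * N) m v (∑ i, c i • p i) := by
  unfold IsQuantumBox at hp ⊢
  classical
  choose ρ A B hρps hρtr hAps hA1 hBps hB1 hmain using hp
  refine ⟨∑ l, (c l : ℂ) • ((ρ l ⊗ₖ (mixE l ⊗ₖ mixE l)).submatrix (mixσ d N) (mixσ d N)),
    fun x a => (∑ l, A l x a ⊗ₖ mixE l).submatrix (mixe d N).symm (mixe d N).symm,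
    fun y b => (∑ l, B l y b ⊗ₖ mixE l).submatrix (mixe d N).symm (mixe d N).symm,
    ?_, ?_, ?_, ?_, ?_, ?_, ?_⟩
  · exact psd_sum _ _ fun l _ => smul_posSemidef (hc l)
      ((kron_posSemidef (hρps l) (kron_posSemidef (mixE_posSemidef l)
        (mixE_posSemidef l))).submatrix _)
  · rw [Matrix.trace_sum]
    have h : ∀ l : Fin N,
        ((c l : ℂ) • ((ρ l ⊗ₖ (mixE l ⊗ₖ mixE l)).submatrix (mixσ d N) (mixσ d N))).trace
        = (c l : ℂ) := by
      intro l
      rw [Matrix.trace_smul, trace_submatrix_equiv', Matrix.trace_kronecker,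
        Matrix.trace_kronecker, hρtr l, trace_mixE]
      simp
    simp only [h, ← Complex.ofReal_sum, hc1, Complex.ofReal_one]
  · intro x a
    exact Matrix.PosSemidef.submatrix
      (psd_sum _ _ fun l _ => kron_posSemidef (hAps l x a) (mixE_posSemidef l)) _
  · intro x
    rw [submatrix_sum']
    have h : (∑ a, ∑ l, A l x a ⊗ₖ mixE l) = (1 : Matrix (Fin d × Fin N) (Fin d × Fin N) ℂ) := by
      rw [Finset.sum_comm]
      rw [Finset.sum_congr rfl fun l _ => (sum_kronecker Finset.univ (fun a => A l x a)
        (mixE l)).symm]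
      rw [Finset.sum_congr rfl fun l (_ : l ∈ Finset.univ) => by rw [hA1 l x]]
      rw [← kronecker_sum, sum_mixE, one_kronecker_one]
    rw [h, Matrix.submatrix_one_equiv]
  · intro y b
    exact Matrix.PosSemidef.submatrix
      (psd_sum _ _ fun l _ => kron_posSemidef (hBps l y b) (mixE_posSemidef l)) _
  · intro y
    rw [submatrix_sum']
    have h : (∑ b, ∑ l, B l y b ⊗ₖ mixE l) = (1 : Matrix (Fin d × Fin N) (Fin d × Fin N) ℂ) := by
      rw [Finset.sum_comm]
      rw [Finset.sum_congr rfl fun l _ => (sum_kronecker Finset.univ (fun b => B l y b)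
        (mixE l)).symm]
      rw [Finset.sum_congr rfl fun l (_ : l ∈ Finset.univ) => by rw [hB1 l y]]
      rw [← kronecker_sum, sum_mixE, one_kronecker_one]
    rw [h, Matrix.submatrix_one_equiv]
  · intro x y a b
    rw [Finset.sum_mul]
    simp only [smul_mul_assoc]
    rw [Matrix.trace_sum]
    simp only [Matrix.trace_smul, smul_eq_mul]
    have h : ∀ l : Fin N,
        (((ρ l ⊗ₖ (mixE l ⊗ₖ mixE l)).submatrix (mixσ d N) (mixσ d N)) *
          (((∑ j, A j x a ⊗ₖ mixE j).submatrix (mixe d N).symm (mixe d N).symm) ⊗ₖ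
            ((∑ k, B k y b ⊗ₖ mixE k).submatrix (mixe d N).symm (mixe d N).symm))).trace
        = (p l x y a b : ℂ) := fun l => by
      rw [mix_trace_key (ρ l) (fun j => A j x a) (fun k => B k y b) l, hmain l x y a b]
    simp only [h]
    push_cast [Finset.sum_apply, Pi.smul_apply, smul_eq_mul]
    rfl
end

section
/- For all d, m, v ≥ 1, the set Q_d of (2,m,v) boxes realizable with local quantum dimension d is a compact and path-connected subset of the finite-dimensional real vector space V = Fin m → Fin m → Fin v → Fin v → ℝ (with its standard topology). -/
open Matrix Kronecker ComplexOrder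

section QdHelpers

variable {n : Type*} [Fintype n] [DecidableEq n]

lemma psd_smul {M : Matrix n n ℂ} (hM : M.PosSemidef) {c : ℝ} (hc : 0 ≤ c) :
    (c • M).PosSemidef := by
  rw [posSemidef_iff_dotProduct_mulVec]
  constructor
  · show (c • M)ᴴ = c • M
    rw [conjTranspose_smul, hM.1]
    norm_num
  · intro x
    rw [smul_mulVec, dotProduct_smul, Complex.real_smul]
    exact mul_nonneg (by exact_mod_cast hc) (hM.dotProduct_mulVec_nonneg x)

lemma psd_diag {M : Matrix n n ℂ} (hM : M.PosSemidef) (i : n) :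
    M i i = ((M i i).re : ℂ) ∧ 0 ≤ (M i i).re := by
  have h := hM.dotProduct_mulVec_nonneg (Pi.single i 1)
  have hv : star (Pi.single i 1 : n → ℂ) ⬝ᵥ M *ᵥ Pi.single i 1 = M i i := by
    rw [mulVec_single]
    simp [dotProduct, Pi.single_apply, apply_ite]
  rw [hv] at h
  obtain ⟨h1, h2⟩ := Complex.le_def.1 h
  refine ⟨?_, by simpa using h1⟩
  apply Complex.ext <;> simp [← h2]

lemma psd_entry_bound {M : Matrix n n ℂ} (hM : M.PosSemidef)
    (hdiag : ∀ i, (M i i).re ≤ 1) (i j : n) : ‖M i j‖ ≤ 1 := by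
  by_cases hij : i = j
  · subst hij
    obtain ⟨h1, h2⟩ := psd_diag hM i
    rw [h1]
    simpa [Complex.norm_real, Real.norm_eq_abs, abs_of_nonneg h2] using hdiag i
  · set u := M i j with hu
    by_cases hu0 : u = 0
    · simp [hu0]
    set r : ℝ := ‖u‖ with hr
    have hrpos : 0 < r := norm_pos_iff.mpr hu0
    have hrne : (r : ℂ) ≠ 0 := by exact_mod_cast hrpos.ne'
    set c : ℂ := -(u / r) with hc
    have habsc : ‖c‖ = 1 := by
      rw [hc, norm_neg, norm_div, Complex.norm_real, Real.norm_eq_abs, abs_of_pos hrpos, ← hr]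
      field_simp
    have hcc : star c * c = 1 := by
      rw [Complex.star_def, ← Complex.normSq_eq_conj_mul_self, ← Complex.sq_norm, habsc]
      norm_num
    have hji : M j i = star u := by
      have := congrFun (congrFun hM.1 j) i
      rw [conjTranspose_apply] at this
      exact this.symm
    have hcu : star c * u = -r := by
      rw [hc, Complex.star_def, map_neg, map_div₀, Complex.conj_ofReal, neg_mul,
        div_mul_eq_mul_div, ← Complex.normSq_eq_conj_mul_self, ← Complex.sq_norm, ← hr]
      rw [neg_eq_iff_eq_neg, neg_neg]
      push_cast
      field_simp
    have huc : (star u) * c = -r := by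
      have h4 := congrArg star hcu
      rw [star_mul', star_star] at h4
      simp only [star_neg, Complex.star_def, Complex.conj_ofReal] at h4
      rw [mul_comm] at h4
      exact h4
    have h := hM.dotProduct_mulVec_nonneg (Pi.single i c + Pi.single j 1)
    have hsx : star (Pi.single i c + Pi.single j 1) =
        Pi.single i (star c) + (Pi.single j 1 : n → ℂ) := by
      funext k
      simp only [Pi.star_apply, Pi.add_apply, Pi.single_apply, star_add,
        apply_ite (star : ℂ → ℂ), star_zero, star_one]
    have hS : star (Pi.single i c + Pi.single j 1) ⬝ᵥ
        M *ᵥ (Pi.single i c + Pi.single j 1) = M i i + M j j - 2 * r := by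
      rw [hsx, mulVec_add, mulVec_single, mulVec_single, dotProduct_add,
        add_dotProduct, add_dotProduct, single_dotProduct, single_dotProduct,
        single_dotProduct, single_dotProduct]
      simp only [Pi.add_apply, Pi.smul_apply, op_smul_eq_mul, col_apply, mul_one, one_mul]
      rw [hji, ← hu]
      have h3 : star c * (M i i * c) = M i i * (star c * c) := by ring
      rw [h3, hcc, huc, hcu]
      ring
    rw [hS] at h
    obtain ⟨h1, _⟩ := Complex.le_def.1 h
    simp only [Complex.zero_re, Complex.sub_re, Complex.add_re, Complex.mul_re,
      Complex.ofReal_re, Complex.ofReal_im, Complex.re_ofNat, Complex.im_ofNat] at h1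
    have hdi := hdiag i
    have hdj := hdiag j
    rw [← hr] at *
    linarith

lemma trace_mul_herm_real {ρ M : Matrix n n ℂ} (hρ : ρ.IsHermitian) (hM : M.IsHermitian) :
    (ρ * M).trace = (((ρ * M).trace).re : ℂ) := by
  have hst : (starRingEnd ℂ) ((ρ * M).trace) = (ρ * M).trace := by
    calc (starRingEnd ℂ) ((ρ * M).trace) = ((ρ * M)ᴴ).trace := (trace_conjTranspose _).symm
    _ = (Mᴴ * ρᴴ).trace := by rw [conjTranspose_mul]
    _ = (M * ρ).trace := by rw [hM, hρ]
    _ = (ρ * M).trace := trace_mul_comm _ _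
  exact (Complex.conj_eq_iff_re.1 hst).symm

lemma kron_herm {d : ℕ} {A B : Matrix (Fin d) (Fin d) ℂ}
    (hA : A.IsHermitian) (hB : B.IsHermitian) : (A ⊗ₖ B).IsHermitian := by
  show (A ⊗ₖ B)ᴴ = A ⊗ₖ B
  ext ⟨i1, i2⟩ ⟨j1, j2⟩
  simp only [conjTranspose_apply, kroneckerMap_apply, star_mul']
  have h1 : star (A j1 i1) = A i1 j1 := by
    rw [← conjTranspose_apply, hA]
  have h2 : star (B j2 i2) = B i2 j2 := by
    rw [← conjTranspose_apply, hB]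
  rw [h1, h2]

lemma isClosed_psd : IsClosed {M : Matrix n n ℂ | M.PosSemidef} := by
  have hnn : IsClosed {z : ℂ | 0 ≤ z} := by
    have heq : {z : ℂ | 0 ≤ z} = Complex.re ⁻¹' (Set.Ici 0) ∩ Complex.im ⁻¹' {0} := by
      ext z
      simp only [Set.mem_setOf_eq, Complex.le_def, Set.mem_inter_iff, Set.mem_preimage,
        Set.mem_Ici, Set.mem_singleton_iff, Complex.zero_re, Complex.zero_im]
      tauto
    rw [heq]
    exact (isClosed_Ici.preimage Complex.continuous_re).inter
      (isClosed_singleton.preimage Complex.continuous_im)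
  have heq : {M : Matrix n n ℂ | M.PosSemidef} =
      {M : Matrix n n ℂ | M.IsHermitian} ∩ ⋂ x : n → ℂ, {M | 0 ≤ star x ⬝ᵥ M *ᵥ x} := by
    ext M
    simp only [Set.mem_setOf_eq, Set.mem_inter_iff, Set.mem_iInter, posSemidef_iff_dotProduct_mulVec]
  rw [heq]
  refine (isClosed_eq continuous_id.matrix_conjTranspose continuous_id).inter
    (isClosed_iInter fun x => ?_)
  exact hnn.preimage (continuous_const.dotProduct
    (continuous_id.matrix_mulVec continuous_const))

lemma compact_entry_ball {ι κ : Type*} [Fintype ι] [Fintype κ] :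
    IsCompact {M : Matrix ι κ ℂ | ∀ i j, ‖M i j‖ ≤ 1} := by
  have h : IsCompact (Set.pi Set.univ
      (fun _ : ι => Set.pi Set.univ fun _ : κ => Metric.closedBall (0 : ℂ) 1) :
        Set (ι → κ → ℂ)) :=
    isCompact_univ_pi fun _ => isCompact_univ_pi fun _ => isCompact_closedBall _ _
  have heq : {M : Matrix ι κ ℂ | ∀ i j, ‖M i j‖ ≤ 1} =
      (Set.pi Set.univ
      (fun _ : ι => Set.pi Set.univ fun _ : κ => Metric.closedBall (0 : ℂ) 1) :
        Set (ι → κ → ℂ)) := by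
    ext M
    constructor
    · intro hM
      intro i _
      intro j _
      rw [Metric.mem_closedBall, Complex.dist_eq, sub_zero]
      exact hM i j
    · intro hM i j
      have := hM i (Set.mem_univ i) j (Set.mem_univ j)
      rwa [Metric.mem_closedBall, Complex.dist_eq, sub_zero] at this
  rw [heq]
  exact h

abbrev QParam (d m v : ℕ) :=
  Matrix (Fin d × Fin d) (Fin d × Fin d) ℂ ×
    (Fin m → Fin v → Matrix (Fin d) (Fin d) ℂ) ×
    (Fin m → Fin v → Matrix (Fin d) (Fin d) ℂ)

noncomputable def QPhi (d m v : ℕ) : QParam d m v → (Fin m → Fin m → Fin v → Fin v → ℝ) :=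
  fun q x y a b => ((q.1 * (q.2.1 x a ⊗ₖ q.2.2 y b)).trace).re

def QK (d m v : ℕ) : Set (QParam d m v) :=
  {q | q.1.PosSemidef ∧ q.1.trace = 1 ∧
    (∀ x a, (q.2.1 x a).PosSemidef) ∧ (∀ x, ∑ a, q.2.1 x a = 1) ∧
    (∀ y b, (q.2.2 y b).PosSemidef) ∧ (∀ y, ∑ b, q.2.2 y b = 1)}

lemma QPhi_continuous (d m v : ℕ) : Continuous (QPhi d m v) := by
  refine continuous_pi fun x => continuous_pi fun y => continuous_pi fun a =>
    continuous_pi fun b => ?_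
  have hA : Continuous fun q : QParam d m v => q.2.1 x a :=
    (continuous_apply a).comp ((continuous_apply x).comp (continuous_fst.comp continuous_snd))
  have hB : Continuous fun q : QParam d m v => q.2.2 y b :=
    (continuous_apply b).comp ((continuous_apply y).comp (continuous_snd.comp continuous_snd))
  have hk : Continuous fun q : QParam d m v => q.2.1 x a ⊗ₖ q.2.2 y b := by
    apply continuous_matrix
    rintro ⟨i1, i2⟩ ⟨j1, j2⟩
    exact (hA.matrix_elem i1 j1).mul (hB.matrix_elem i2 j2)
  exact Complex.continuous_re.comp (continuous_fst.matrix_mul hk).matrix_trace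

lemma QK_image (d m v : ℕ) :
    {p : Fin m → Fin m → Fin v → Fin v → ℝ | IsQuantumBox d m v p} =
      QPhi d m v '' QK d m v := by
  ext p
  constructor
  · rintro ⟨ρ, A, B, h1, h2, h3, h4, h5, h6, h7⟩
    refine ⟨(ρ, A, B), ⟨h1, h2, h3, h4, h5, h6⟩, ?_⟩
    funext x y a b
    show ((ρ * (A x a ⊗ₖ B y b)).trace).re = p x y a b
    rw [h7 x y a b, Complex.ofReal_re]
  · rintro ⟨⟨ρ, A, B⟩, ⟨h1, h2, h3, h4, h5, h6⟩, rfl⟩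
    exact ⟨ρ, A, B, h1, h2, h3, h4, h5, h6, fun x y a b =>
      trace_mul_herm_real h1.1 (kron_herm (h3 x a).1 (h5 y b).1)⟩

lemma QK_isClosed (d m v : ℕ) : IsClosed (QK d m v) := by
  have c1 : IsClosed {q : QParam d m v | q.1.PosSemidef} :=
    isClosed_psd.preimage continuous_fst
  have c2 : IsClosed {q : QParam d m v | q.1.trace = 1} :=
    isClosed_eq continuous_fst.matrix_trace continuous_const
  have hA : ∀ x a, Continuous fun q : QParam d m v => q.2.1 x a := fun x a =>
    (continuous_apply a).comp ((continuous_apply x).comp (continuous_fst.comp continuous_snd))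
  have hB : ∀ y b, Continuous fun q : QParam d m v => q.2.2 y b := fun y b =>
    (continuous_apply b).comp ((continuous_apply y).comp (continuous_snd.comp continuous_snd))
  have c3 : IsClosed {q : QParam d m v | ∀ x a, (q.2.1 x a).PosSemidef} := by
    have : {q : QParam d m v | ∀ x a, (q.2.1 x a).PosSemidef} =
        ⋂ x, ⋂ a, {q | (q.2.1 x a).PosSemidef} := by
      ext q; simp [Set.mem_iInter]
    rw [this]
    exact isClosed_iInter fun x => isClosed_iInter fun a => isClosed_psd.preimage (hA x a)
  have c4 : IsClosed {q : QParam d m v | ∀ x, ∑ a, q.2.1 x a = 1} := by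
    have : {q : QParam d m v | ∀ x, ∑ a, q.2.1 x a = 1} =
        ⋂ x, {q | ∑ a, q.2.1 x a = 1} := by
      ext q; simp [Set.mem_iInter]
    rw [this]
    exact isClosed_iInter fun x => isClosed_eq
      (continuous_finset_sum _ fun a _ => hA x a) continuous_const
  have c5 : IsClosed {q : QParam d m v | ∀ y b, (q.2.2 y b).PosSemidef} := by
    have : {q : QParam d m v | ∀ y b, (q.2.2 y b).PosSemidef} =
        ⋂ y, ⋂ b, {q | (q.2.2 y b).PosSemidef} := by
      ext q; simp [Set.mem_iInter]
    rw [this]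
    exact isClosed_iInter fun y => isClosed_iInter fun b => isClosed_psd.preimage (hB y b)
  have c6 : IsClosed {q : QParam d m v | ∀ y, ∑ b, q.2.2 y b = 1} := by
    have : {q : QParam d m v | ∀ y, ∑ b, q.2.2 y b = 1} =
        ⋂ y, {q | ∑ b, q.2.2 y b = 1} := by
      ext q; simp [Set.mem_iInter]
    rw [this]
    exact isClosed_iInter fun y => isClosed_eq
      (continuous_finset_sum _ fun b _ => hB y b) continuous_const
  exact c1.inter (c2.inter (c3.inter (c4.inter (c5.inter c6))))

lemma povm_diag_bound {d' : ℕ} {A : Fin v → Matrix (Fin d') (Fin d') ℂ}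
    (hpsd : ∀ a, (A a).PosSemidef) (hsum : ∑ a, A a = 1) (a : Fin v) (i : Fin d') :
    ((A a i i).re) ≤ 1 := by
  have hentry : ∑ a', (A a' i i).re = 1 := by
    have h1 : (∑ a', A a') i i = (1 : Matrix (Fin d') (Fin d') ℂ) i i := by rw [hsum]
    rw [Matrix.sum_apply, Matrix.one_apply_eq] at h1
    have := congrArg Complex.re h1
    rwa [Complex.re_sum, Complex.one_re] at this
  calc (A a i i).re ≤ ∑ a', (A a' i i).re :=
    Finset.single_le_sum (fun a' _ => (psd_diag (hpsd a') i).2) (Finset.mem_univ a)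
  _ = 1 := hentry

lemma QK_isCompact (d m v : ℕ) : IsCompact (QK d m v) := by
  have hS : IsCompact
      ({M : Matrix (Fin d × Fin d) (Fin d × Fin d) ℂ | ∀ i j, ‖M i j‖ ≤ 1} ×ˢ
       ({F : Fin m → Fin v → Matrix (Fin d) (Fin d) ℂ |
          ∀ x a, ∀ i j, ‖F x a i j‖ ≤ 1} ×ˢ
        {F : Fin m → Fin v → Matrix (Fin d) (Fin d) ℂ |
          ∀ x a, ∀ i j, ‖F x a i j‖ ≤ 1})) := by
    have hF : IsCompact {F : Fin m → Fin v → Matrix (Fin d) (Fin d) ℂ |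
        ∀ x a, ∀ i j, ‖F x a i j‖ ≤ 1} := by
      have h : IsCompact (Set.pi Set.univ (fun _ : Fin m => Set.pi Set.univ fun _ : Fin v =>
          {M : Matrix (Fin d) (Fin d) ℂ | ∀ i j, ‖M i j‖ ≤ 1})) :=
        isCompact_univ_pi fun _ => isCompact_univ_pi fun _ => compact_entry_ball
      have heq : {F : Fin m → Fin v → Matrix (Fin d) (Fin d) ℂ |
          ∀ x a, ∀ i j, ‖F x a i j‖ ≤ 1} =
          Set.pi Set.univ (fun _ : Fin m => Set.pi Set.univ fun _ : Fin v =>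
          {M : Matrix (Fin d) (Fin d) ℂ | ∀ i j, ‖M i j‖ ≤ 1}) := by
        ext F
        simp [Set.mem_pi]
      rw [heq]
      exact h
    exact compact_entry_ball.prod (hF.prod hF)
  refine hS.of_isClosed_subset (QK_isClosed d m v) ?_
  rintro ⟨ρ, A, B⟩ ⟨h1, h2, h3, h4, h5, h6⟩
  have hρdiag : ∀ i, (ρ i i).re ≤ 1 := by
    intro i
    have htr : ∑ k, (ρ k k).re = 1 := by
      have := congrArg Complex.re h2
      rwa [Matrix.trace, Complex.re_sum, Complex.one_re] at this
    calc (ρ i i).re ≤ ∑ k, (ρ k k).re :=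
      Finset.single_le_sum (fun k _ => (psd_diag h1 k).2) (Finset.mem_univ i)
    _ = 1 := htr
  refine ⟨psd_entry_bound h1 hρdiag, fun x a i j => ?_, fun y b i j => ?_⟩
  · exact psd_entry_bound (h3 x a) (povm_diag_bound (h3 x) (h4 x) a) i j
  · exact psd_entry_bound (h5 y b) (povm_diag_bound (h5 y) (h6 y) b) i j

lemma QK_convex (d m v : ℕ) : Convex ℝ (QK d m v) := by
  rintro ⟨ρ, A, B⟩ ⟨h1, h2, h3, h4, h5, h6⟩ ⟨ρ', A', B'⟩ ⟨h1', h2', h3', h4', h5', h6'⟩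
    s t hs ht hst
  refine ⟨(psd_smul h1 hs).add (psd_smul h1' ht), ?_, fun x a => ?_, fun x => ?_,
    fun y b => ?_, fun y => ?_⟩
  · show (s • ρ + t • ρ').trace = 1
    rw [trace_add, trace_smul, trace_smul, h2, h2', ← add_smul, hst, one_smul]
  · exact (psd_smul (h3 x a) hs).add (psd_smul (h3' x a) ht)
  · show ∑ a, (s • A x a + t • A' x a) = 1
    rw [Finset.sum_add_distrib, ← Finset.smul_sum, ← Finset.smul_sum, h4 x, h4' x,
      ← add_smul, hst, one_smul]
  · exact (psd_smul (h5 y b) hs).add (psd_smul (h5' y b) ht)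
  · show ∑ b, (s • B y b + t • B' y b) = 1
    rw [Finset.sum_add_distrib, ← Finset.smul_sum, ← Finset.smul_sum, h6 y, h6' y,
      ← add_smul, hst, one_smul]

lemma QK_nonempty (d m v : ℕ) (hd : 1 ≤ d) (hv : 1 ≤ v) : (QK d m v).Nonempty := by
  have hdpos : (0:ℝ) < (d : ℝ) := by exact_mod_cast hd
  have hd0 : (0:ℝ) < ((d : ℝ) * d) := by positivity
  set a0 : Fin v := ⟨0, hv⟩
  set ρ0 : Matrix (Fin d × Fin d) (Fin d × Fin d) ℂ := (((d:ℝ) * d)⁻¹) • 1 with hρ0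
  set A0 : Fin m → Fin v → Matrix (Fin d) (Fin d) ℂ :=
    fun _ a => if a = a0 then 1 else 0 with hA0
  refine ⟨(ρ0, A0, A0), psd_smul Matrix.PosSemidef.one (by positivity), ?_,
    fun x a => ?_, fun x => ?_, fun x a => ?_, fun x => ?_⟩
  · show ρ0.trace = 1
    rw [hρ0, trace_smul, trace_one]
    have hcard : (Fintype.card (Fin d × Fin d) : ℂ) = (d : ℂ) * d := by
      simp [Fintype.card_prod]
    rw [hcard, Complex.real_smul]
    push_cast
    field_simp
  · show (A0 x a).PosSemidef
    rw [hA0]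
    dsimp only
    split_ifs
    · exact Matrix.PosSemidef.one
    · exact Matrix.PosSemidef.zero
  · show ∑ a, A0 x a = 1
    rw [hA0]
    simp [Finset.sum_ite_eq']
  · show (A0 x a).PosSemidef
    rw [hA0]
    dsimp only
    split_ifs
    · exact Matrix.PosSemidef.one
    · exact Matrix.PosSemidef.zero
  · show ∑ a, A0 x a = 1
    rw [hA0]
    simp [Finset.sum_ite_eq']

end QdHelpers

/-- `Q_d` is a compact and path-connected subset of the space of boxes. -/
theorem Qd_compact_and_pathConnected (d m v : ℕ)
    (hd : 1 ≤ d) (hm : 1 ≤ m) (hv : 1 ≤ v) :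
    IsCompact {p : Fin m → Fin m → Fin v → Fin v → ℝ | IsQuantumBox d m v p} ∧
    IsPathConnected
      {p : Fin m → Fin m → Fin v → Fin v → ℝ | IsQuantumBox d m v p} := by
  rw [QK_image d m v]
  exact ⟨(QK_isCompact d m v).image (QPhi_continuous d m v),
    ((QK_convex d m v).isPathConnected (QK_nonempty d m v hd hv)).image
      (QPhi_continuous d m v)⟩
end

section
/- For all dA, dB, m, v ≥ 1, define Q_{dA,dB} as the set of (2,m,v) boxes p for which there exist a density matrix ρ : Matrix ((Fin dA) × (Fin dB)) ((Fin dA) × (Fin dB)) ℂ (positive semidefinite with trace 1) and POVMs A : Fin m → Fin v → Matrix (Fin dA) (Fin dA) ℂ and B : Fin m → Fin v → Matrix (Fin dB) (Fin dB) ℂ (each A x a, B y b positive semidefinite, ∑_a A x a = 1, ∑_b B y b = 1) such that the trace of ρ * (A x a ⊗ₖ B y b) equals p x y a b for all x, y, a, b. Then Q_{dA,dB} = Q_{dmin,dmin}, where dmin = min dA dB: the correlations achievable with the asymmetric dimensions (dA, dB) coincide with those achievable when both parties have the minimum dimension. -/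
open Matrix Kronecker ComplexOrder

/-- Membership in `Q_{dA,dB}`: the box is realizable by a shared quantum state with
(possibly asymmetric) local dimensions `dA` and `dB`, together with local POVMs. -/
def IsQuantumBoxAsym (dA dB m v : ℕ)
    (p : Fin m → Fin m → Fin v → Fin v → ℝ) : Prop :=
  ∃ (ρ : Matrix ((Fin dA) × (Fin dB)) ((Fin dA) × (Fin dB)) ℂ)
    (A : Fin m → Fin v → Matrix (Fin dA) (Fin dA) ℂ)
    (B : Fin m → Fin v → Matrix (Fin dB) (Fin dB) ℂ),
    ρ.PosSemidef ∧ ρ.trace = 1 ∧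
    (∀ x a, (A x a).PosSemidef) ∧ (∀ x, ∑ a, A x a = 1) ∧
    (∀ y b, (B y b).PosSemidef) ∧ (∀ y, ∑ b, B y b = 1) ∧
    ∀ x y a b, (ρ * (A x a ⊗ₖ B y b)).trace = (p x y a b : ℂ)

/-!
Enlarging a local dimension loses nothing: embed the smaller space isometrically and add the
projector onto the orthogonal complement to one outcome of every POVM.

Conversely, all that Alice's measurements do is captured by the assemblage
`σ_{a|x} = Tr_A[ρ (A_{a|x} ⊗ 1)]` of unnormalised states of Bob, which sum to Bob's reduced state
`R = U diag(s²) U*`. Every such assemblage is produced by a single state on `ℂ^dB ⊗ ℂ^dB`, the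
purification of `R` given by the vectorisation of `U diag(s)`, once Alice measures the POVM
`diag(s)⁻¹ U* σ_{a|x} U diag(s)⁻¹` (completed on the kernel of `R`), transposed. So Alice's dimension
can be lowered to Bob's, and by symmetry Bob's to Alice's.
-/

namespace Matrix

section PosSemidef

variable {n : Type*} [Fintype n]

lemma PosSemidef.trace_mul_nonneg {P M : Matrix n n ℂ} (hP : P.PosSemidef) (hM : M.PosSemidef) :
    0 ≤ (P * M).trace := by
  classical
  obtain ⟨C, rfl⟩ : ∃ C : Matrix n n ℂ, P = star C * C := by
    open scoped MatrixOrder in exact CStarAlgebra.nonneg_iff_eq_star_mul_self.mp hP.nonneg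
  rw [trace_mul_cycle, trace_mul_cycle, star_eq_conjTranspose]
  exact (hM.mul_mul_conjTranspose_same C).trace_nonneg

lemma PosSemidef.apply_eq_zero_of_diag_eq_zero_right {M : Matrix n n ℂ} (hM : M.PosSemidef)
    {i : n} (hi : M i i = 0) (j : n) : M j i = 0 := by
  classical
  have h0 : star (Pi.single i 1 : n → ℂ) ⬝ᵥ M *ᵥ Pi.single i 1 = 0 := by
    simpa [dotProduct, mulVec, Pi.single_apply] using hi
  simpa [mulVec, Pi.single_apply] using congrFun ((hM.dotProduct_mulVec_zero_iff _).mp h0) j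

lemma PosSemidef.apply_eq_zero_of_diag_eq_zero_left {M : Matrix n n ℂ} (hM : M.PosSemidef)
    {i : n} (hi : M i i = 0) (j : n) : M i j = 0 := by
  rw [← hM.isHermitian.apply, hM.apply_eq_zero_of_diag_eq_zero_right hi j, star_zero]

end PosSemidef

lemma trace_submatrix_equiv {m n R : Type*} [Fintype m] [Fintype n] [AddCommMonoid R]
    (M : Matrix n n R) (e : m ≃ n) : (M.submatrix e e).trace = M.trace :=
  Fintype.sum_equiv e _ _ fun _ => rfl

section Steer

variable {l n : Type*} [Fintype l]

/-- `steer ρ M = Tr_A[ρ (M ⊗ 1)]`, the unnormalised state of `B` after an outcome of effect `M`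
on `A`. -/
def steer (ρ : Matrix (l × n) (l × n) ℂ) (M : Matrix l l ℂ) : Matrix n n ℂ :=
  of fun j j' => ∑ i, ∑ i', ρ (i, j) (i', j') * M i' i

lemma trace_steer_mul [Fintype n] (ρ : Matrix (l × n) (l × n) ℂ) (M : Matrix l l ℂ)
    (N : Matrix n n ℂ) : (steer ρ M * N).trace = (ρ * (M ⊗ₖ N)).trace := by
  simp only [trace, diag, mul_apply, steer, of_apply, kroneckerMap_apply, Fintype.sum_prod_type,
    Finset.sum_mul]
  simp_rw [Finset.sum_comm (γ := n) (α := l), mul_assoc]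

lemma trace_steer_one [Fintype n] [DecidableEq l] [DecidableEq n] (ρ : Matrix (l × n) (l × n) ℂ) :
    (steer ρ 1).trace = ρ.trace := by
  rw [← Matrix.mul_one (steer ρ 1), trace_steer_mul, one_kronecker_one, Matrix.mul_one]

lemma steer_sum {ι : Type*} [Fintype ι] (ρ : Matrix (l × n) (l × n) ℂ) (M : ι → Matrix l l ℂ) :
    steer ρ (∑ a, M a) = ∑ a, steer ρ (M a) := by
  ext j j'
  simp only [steer, of_apply, sum_apply, Finset.mul_sum]
  simp_rw [Finset.sum_comm (γ := l) (α := ι)]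

lemma PosSemidef.steer [Fintype n] {ρ : Matrix (l × n) (l × n) ℂ} {M : Matrix l l ℂ}
    (hρ : ρ.PosSemidef) (hM : M.PosSemidef) : (steer ρ M).PosSemidef := by
  refine posSemidef_iff_dotProduct_mulVec.mpr ⟨?_, fun x => ?_⟩
  · ext j j'
    simp only [conjTranspose_apply, Matrix.steer, of_apply, star_sum, star_mul']
    rw [Finset.sum_comm]
    refine Finset.sum_congr rfl fun i _ => Finset.sum_congr rfl fun i' _ => ?_
    rw [hρ.isHermitian.apply, hM.isHermitian.apply, mul_comm]
  · have hx : star x ⬝ᵥ Matrix.steer ρ M *ᵥ x =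
        (Matrix.steer ρ M * vecMulVec x (star x)).trace := by
      rw [mul_vecMulVec, trace_vecMulVec, dotProduct_comm]
    rw [hx, trace_steer_mul]
    exact hρ.trace_mul_nonneg (hM.kronecker (posSemidef_vecMulVec_self_star x))

lemma steer_vecMulVec (S : Matrix n l ℂ) (M : Matrix l l ℂ) :
    steer (vecMulVec (fun q : l × n => S q.2 q.1) (star fun q : l × n => S q.2 q.1)) M =
      S * Mᵀ * Sᴴ := by
  ext j j'
  simp only [steer, of_apply, vecMulVec_apply, Pi.star_apply, mul_apply, transpose_apply,
    conjTranspose_apply, Finset.sum_mul]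
  rw [Finset.sum_comm]
  simp_rw [mul_right_comm _ (star _)]

end Steer

section POVM

variable {n ι : Type*} [Fintype n] [DecidableEq n] [Fintype ι] [DecidableEq ι]

lemma exists_povm_diagonal_conj_eq (s : n → ℝ) (T : ι → Matrix n n ℂ)
    (hT : ∀ a, (T a).PosSemidef) (hsum : ∑ a, T a = diagonal fun i => (s i : ℂ) ^ 2) (a₀ : ι) :
    ∃ E : ι → Matrix n n ℂ, (∀ a, (E a).PosSemidef) ∧ ∑ a, E a = 1 ∧
      ∀ a, diagonal (fun i => (s i : ℂ)) * E a * diagonal (fun i => (s i : ℂ)) = T a := by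
  have hdiag : ∀ a i, s i = 0 → T a i i = 0 := fun a i hi =>
    (Finset.sum_eq_zero_iff_of_nonneg fun b _ => (hT b).diag_nonneg).mp
      (by simpa [sum_apply, hi] using congrFun (congrFun hsum i) i) a (Finset.mem_univ a)
  -- `(s i)⁻¹ = 0` where `s i = 0`: there every `T a` vanishes and `K` fills in the identity.
  set G : Matrix n n ℂ := diagonal fun i => ((s i)⁻¹ : ℝ)
  set K : Matrix n n ℂ := diagonal fun i => if s i = 0 then 1 else 0
  have hG : Gᴴ = G := by simp [G]
  refine ⟨fun a => G * T a * G + if a = a₀ then K else 0, fun a => ?_, ?_, fun a => ?_⟩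
  · refine (hG ▸ (hT a).conjTranspose_mul_mul_same G).add ?_
    split_ifs
    · exact PosSemidef.diagonal fun i => by dsimp; split_ifs <;> simp
    · exact PosSemidef.zero
  · rw [Finset.sum_add_distrib, ← Finset.sum_mul, ← Finset.mul_sum, hsum, Finset.sum_ite_eq',
      if_pos (Finset.mem_univ _), diagonal_mul_diagonal, diagonal_mul_diagonal, diagonal_add,
      ← diagonal_one]
    congr 1
    funext i
    by_cases hi : s i = 0
    · simp [hi]
    · simp only [hi, if_false, add_zero, Complex.ofReal_inv]
      field_simp
  · ext i j
    rw [mul_diagonal, diagonal_mul]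
    by_cases hi : s i = 0
    · simp [hi, (hT a).apply_eq_zero_of_diag_eq_zero_left (hdiag a i hi)]
    by_cases hj : s j = 0
    · simp [hj, (hT a).apply_eq_zero_of_diag_eq_zero_right (hdiag a j hj)]
    have hK : (if a = a₀ then K else 0) i j = 0 := by
      split_ifs <;> simp [K, diagonal_apply, hi]
    simp only [add_apply, hK, add_zero, G, mul_diagonal, diagonal_mul, Complex.ofReal_inv]
    field_simp

lemma PosSemidef.exists_unitary_diagonal_sq {R : Matrix n n ℂ} (hR : R.PosSemidef) :
    ∃ U ∈ unitaryGroup n ℂ, ∃ s : n → ℝ, R = U * diagonal (fun i => (s i : ℂ) ^ 2) * star U := by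
  refine ⟨_, hR.isHermitian.eigenvectorUnitary.2, fun i => √(hR.isHermitian.eigenvalues i), ?_⟩
  conv_lhs => rw [hR.isHermitian.spectral_theorem]
  simp [← Complex.ofReal_pow, Real.sq_sqrt (hR.eigenvalues_nonneg _), Function.comp_def]

theorem PosSemidef.exists_purification {R : Matrix n n ℂ} (hR : R.PosSemidef) (a₀ : ι) :
    ∃ ρ : Matrix (n × n) (n × n) ℂ, ρ.PosSemidef ∧ Matrix.steer ρ 1 = R ∧
      ∀ T : ι → Matrix n n ℂ, (∀ a, (T a).PosSemidef) → ∑ a, T a = R →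
        ∃ E : ι → Matrix n n ℂ, (∀ a, (E a).PosSemidef) ∧ ∑ a, E a = 1 ∧
          ∀ a, Matrix.steer ρ (E a) = T a := by
  obtain ⟨U, hU, s, rfl⟩ := hR.exists_unitary_diagonal_sq
  have hUU : star U * U = 1 := mem_unitaryGroup_iff'.mp hU
  have hUU' : U * star U = 1 := mem_unitaryGroup_iff.mp hU
  set D : Matrix n n ℂ := diagonal fun i => (s i : ℂ)
  set S := U * D
  have hD : Dᴴ = D := by simp [D]
  have hS : ∀ X, S * X * Sᴴ = U * (D * X * D) * star U := fun X => by
    simp only [S, conjTranspose_mul, hD, star_eq_conjTranspose, Matrix.mul_assoc]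
  refine ⟨vecMulVec (fun q : n × n => S q.2 q.1) (star fun q : n × n => S q.2 q.1),
    posSemidef_vecMulVec_self_star _, ?_, fun T hT hsum => ?_⟩
  · rw [steer_vecMulVec, transpose_one, hS, Matrix.mul_one, diagonal_mul_diagonal]
    simp only [sq]
  have hTsum : ∑ a, star U * T a * U = diagonal fun i => (s i : ℂ) ^ 2 := by
    rw [← Finset.sum_mul, ← Finset.mul_sum, hsum]
    simp only [← Matrix.mul_assoc, hUU, Matrix.one_mul]
    rw [Matrix.mul_assoc, hUU, Matrix.mul_one]
  obtain ⟨F, hF, hFsum, hFT⟩ := exists_povm_diagonal_conj_eq s (fun a => star U * T a * U)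
    (fun a => star_eq_conjTranspose U ▸ (hT a).conjTranspose_mul_mul_same U) hTsum a₀
  refine ⟨fun a => (F a)ᵀ, fun a => (hF a).transpose,
    by rw [← transpose_sum, hFsum, transpose_one], fun a => ?_⟩
  rw [steer_vecMulVec, transpose_transpose, hS, hFT]
  simp only [← Matrix.mul_assoc, hUU', Matrix.one_mul]
  rw [Matrix.mul_assoc, hUU', Matrix.mul_one]

lemma exists_povm_conjTranspose_mul_mul_eq {l : Type*} [Fintype l] [DecidableEq l]
    {V : Matrix l n ℂ} (hV : Vᴴ * V = 1) (A : ι → Matrix n n ℂ) (hA : ∀ a, (A a).PosSemidef)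
    (hsum : ∑ a, A a = 1) (a₀ : ι) :
    ∃ A' : ι → Matrix l l ℂ, (∀ a, (A' a).PosSemidef) ∧ ∑ a, A' a = 1 ∧
      ∀ a, Vᴴ * A' a * V = A a := by
  set Q := 1 - V * Vᴴ
  have hQ : Qᴴ * Q = Q := by
    have hVV : V * Vᴴ * (V * Vᴴ) = V * Vᴴ := by
      rw [Matrix.mul_assoc, ← Matrix.mul_assoc Vᴴ, hV, Matrix.one_mul]
    simp only [Q, conjTranspose_sub, conjTranspose_one, conjTranspose_mul,
      conjTranspose_conjTranspose, Matrix.sub_mul, Matrix.mul_sub, Matrix.one_mul, Matrix.mul_one,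
      hVV, sub_self, sub_zero]
  have hVQV : Vᴴ * Q * V = 0 := by
    simp only [Q, Matrix.mul_sub, Matrix.mul_one, ← Matrix.mul_assoc, hV, Matrix.one_mul, sub_self,
      Matrix.zero_mul]
  refine ⟨fun a => V * A a * Vᴴ + if a = a₀ then Q else 0, fun a => ?_, ?_, fun a => ?_⟩
  · refine ((hA a).mul_mul_conjTranspose_same V).add ?_
    split_ifs
    · exact hQ ▸ posSemidef_conjTranspose_mul_self Q
    · exact PosSemidef.zero
  · rw [Finset.sum_add_distrib, ← Matrix.sum_mul, ← Matrix.mul_sum, hsum, Finset.sum_ite_eq',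
      if_pos (Finset.mem_univ _), Matrix.mul_one, add_sub_cancel]
  · rw [Matrix.mul_add, Matrix.add_mul, apply_ite (Vᴴ * ·), apply_ite (· * V), hVQV]
    simp only [Matrix.mul_zero, Matrix.zero_mul, ite_self, add_zero, ← Matrix.mul_assoc, hV,
      Matrix.one_mul]
    rw [Matrix.mul_assoc, hV, Matrix.mul_one]

end POVM

end Matrix

namespace IsQuantumBoxAsym

variable {dA dB m v : ℕ} {p : Fin m → Fin m → Fin v → Fin v → ℝ}

lemma swap (h : IsQuantumBoxAsym dA dB m v p) :
    IsQuantumBoxAsym dB dA m v fun x y a b => p y x b a := by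
  obtain ⟨ρ, A, B, hρ, hρtr, hA, hAsum, hB, hBsum, hp⟩ := h
  set e := Equiv.prodComm (Fin dB) (Fin dA)
  refine ⟨ρ.submatrix e e, B, A, hρ.submatrix _, by rw [trace_submatrix_equiv, hρtr], hB, hBsum,
    hA, hAsum, fun x y a b => ?_⟩
  have hk : B x a ⊗ₖ A y b = (A y b ⊗ₖ B x a).submatrix e e := by
    ext ⟨i, j⟩ ⟨i', j'⟩
    exact mul_comm _ _
  rw [hk, submatrix_mul_equiv, trace_submatrix_equiv, hp]

lemma mono_left {d : ℕ} (hv : 0 < v) (hd : d ≤ dA) (h : IsQuantumBoxAsym d dB m v p) :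
    IsQuantumBoxAsym dA dB m v p := by
  obtain ⟨ρ, A, B, hρ, hρtr, hA, hAsum, hB, hBsum, hp⟩ := h
  set V : Matrix (Fin dA) (Fin d) ℂ := (1 : Matrix (Fin dA) (Fin dA) ℂ).submatrix id (Fin.castLE hd)
  have hV : Vᴴ * V = 1 := by
    ext i j
    simp [V, conjTranspose_submatrix, mul_apply, one_apply]
  choose A' hA' hA'sum hVA' using fun x =>
    exists_povm_conjTranspose_mul_mul_eq hV (A x) (hA x) (hAsum x) (⟨0, hv⟩ : Fin v)
  set W := V ⊗ₖ (1 : Matrix (Fin dB) (Fin dB) ℂ)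
  have hW : ∀ (M : Matrix (Fin dA) (Fin dA) ℂ) (N : Matrix (Fin dB) (Fin dB) ℂ),
      Wᴴ * (M ⊗ₖ N) * W = (Vᴴ * M * V) ⊗ₖ N := fun M N => by
    rw [conjTranspose_kronecker, conjTranspose_one, ← mul_kronecker_mul, ← mul_kronecker_mul,
      Matrix.one_mul, Matrix.mul_one]
  have hWtr : ∀ X, (W * ρ * Wᴴ * X).trace = (ρ * (Wᴴ * X * W)).trace := fun X => by
    rw [Matrix.mul_assoc, Matrix.mul_assoc, trace_mul_comm, Matrix.mul_assoc, Matrix.mul_assoc]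
  refine ⟨W * ρ * Wᴴ, A', B, hρ.mul_mul_conjTranspose_same W, ?_, hA', hA'sum, hB, hBsum,
    fun x y a b => ?_⟩
  · rw [← Matrix.mul_one (W * ρ * Wᴴ), hWtr, ← one_kronecker_one, hW, Matrix.mul_one, hV,
      one_kronecker_one, Matrix.mul_one, hρtr]
  · rw [hWtr, hW, hVA', hp]

lemma mono_right {d : ℕ} (hv : 0 < v) (hd : d ≤ dB) (h : IsQuantumBoxAsym dA d m v p) :
    IsQuantumBoxAsym dA dB m v p :=
  (h.swap.mono_left hv hd).swap

lemma reduce_left (hv : 0 < v) (h : IsQuantumBoxAsym dA dB m v p) :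
    IsQuantumBoxAsym dB dB m v p := by
  obtain ⟨ρ, A, B, hρ, hρtr, hA, hAsum, hB, hBsum, hp⟩ := h
  obtain ⟨ρ', hρ', hρ'R, hsteer⟩ :=
    (hρ.steer PosSemidef.one).exists_purification (⟨0, hv⟩ : Fin v)
  choose A' hA' hA'sum hA'steer using fun x =>
    hsteer (fun a => steer ρ (A x a)) (fun a => hρ.steer (hA x a)) (by rw [← steer_sum, hAsum])
  refine ⟨ρ', A', B, hρ', ?_, hA', hA'sum, hB, hBsum, fun x y a b => ?_⟩
  · rw [← trace_steer_one, hρ'R, trace_steer_one, hρtr]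
  · rw [← trace_steer_mul, hA'steer, trace_steer_mul, hp]

lemma reduce_right (hv : 0 < v) (h : IsQuantumBoxAsym dA dB m v p) :
    IsQuantumBoxAsym dA dA m v p :=
  (h.swap.reduce_left hv).swap

end IsQuantumBoxAsym

theorem asym_dims_reduce_to_min_general (dA dB m v : ℕ) (hv : 1 ≤ v) :
    {p : Fin m → Fin m → Fin v → Fin v → ℝ | IsQuantumBoxAsym dA dB m v p} =
      {p : Fin m → Fin m → Fin v → Fin v → ℝ |
        IsQuantumBoxAsym (min dA dB) (min dA dB) m v p} := by
  ext p
  refine ⟨fun h => ?_, fun h => (h.mono_left hv (min_le_left _ _)).mono_right hv (min_le_right _ _)⟩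
  rcases le_total dA dB with hle | hle
  · rw [Set.mem_ofPred_eq, min_eq_left hle]
    exact h.reduce_right hv
  · rw [Set.mem_ofPred_eq, min_eq_right hle]
    exact h.reduce_left hv

/-- asymmetric local dimensions `(dA, dB)` give exactly the same
bipartite correlations as the symmetric minimum dimension `min dA dB`. -/
theorem asym_dims_reduce_to_min (dA dB m v : ℕ)
    (hdA : 1 ≤ dA) (hdB : 1 ≤ dB) (hm : 1 ≤ m) (hv : 1 ≤ v) :
    {p : Fin m → Fin m → Fin v → Fin v → ℝ | IsQuantumBoxAsym dA dB m v p} =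
      {p : Fin m → Fin m → Fin v → Fin v → ℝ |
        IsQuantumBoxAsym (min dA dB) (min dA dB) m v p} :=
  asym_dims_reduce_to_min_general dA dB m v hv
end

section
/- For all m ≥ 1 and v ≥ 1, every box p in the local polytope L∞ of the (2,m,v) scenario admits a decomposition in which Bob's responses are deterministic functions of the shared variable: there exist a nonnegative weight w : (Fin m → Fin v) → ℝ with ∑_g w g = 1 and nonnegative response functions f : (Fin m → Fin v) → Fin m → Fin v → ℝ with ∑_a f g x a = 1 for all g, x, such that p x y a b = ∑_{g : Fin m → Fin v} w g * f g x a * (if b = g y then 1 else 0) for all x, y, a, b. In particular, shared randomness of dimension v^m suffices to span the local polytope (|λ*| ≤ v^{m(n−1)} for n = 2). -/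
open Matrix Kronecker ComplexOrder

/-! A product box `F ⊗ G` is the mixture, over Bob's deterministic strategies `γ : Y → B`
weighted by the product distribution `∏ y, G y (γ y)`, of the boxes `F ⊗ δ_{γ y}`. Boxes that
are such mixtures form a convex set: mixing two of them mixes the weights and, for each `γ`,
renormalises the correspondingly mixed responses of Alice. So they contain the local polytope. -/

open Finset

section DeterministicMixture

variable {ι β R : Type*} [Fintype ι] [DecidableEq ι] [Fintype β] [CommSemiring R]

theorem Fintype.sum_pi_prod_eq_one (G : ι → β → R) (hG : ∀ i, ∑ b, G i b = 1) :
    ∑ γ : ι → β, ∏ i, G i (γ i) = 1 := by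
  simp [← Fintype.prod_sum, hG]

/-- The distributions `G i` are the marginals of their product distribution on `ι → β`. -/
theorem Fintype.sum_pi_prod_mul_ite_eq [DecidableEq β] (G : ι → β → R) (hG : ∀ i, ∑ b, G i b = 1)
    (i : ι) (b : β) :
    ∑ γ : ι → β, (∏ j, G j (γ j)) * (if b = γ i then 1 else 0) = G i b := by
  have hsplit : ∀ γ : ι → β, (∏ j, G j (γ j)) * (if b = γ i then 1 else 0) =
      ∏ j, G j (γ j) * (if j = i then (if b = γ j then 1 else 0) else 1) := fun γ => by
    rw [prod_mul_distrib, Fintype.prod_ite_eq']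
  simp only [hsplit]
  rw [← Fintype.prod_sum fun j c => G j c * if j = i then (if b = c then 1 else 0) else 1,
    Fintype.prod_eq_single i fun j hj => by simp [hj, hG]]
  simp

end DeterministicMixture

/-- If `W = 0` all rows of `N` vanish and any distribution will do. -/
theorem exists_stochastic_mul_eq {α β : Type*} [Fintype β] [Nonempty β]
    (N : α → β → ℝ) (W : ℝ) (hN : ∀ x b, 0 ≤ N x b) (hW : ∀ x, ∑ b, N x b = W) :
    ∃ f : α → β → ℝ, (∀ x b, 0 ≤ f x b) ∧ (∀ x, ∑ b, f x b = 1) ∧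
      ∀ x b, W * f x b = N x b := by
  classical
  by_cases hW0 : W = 0
  · obtain ⟨b₀⟩ := ‹Nonempty β›
    refine ⟨fun _ b => if b = b₀ then 1 else 0, fun _ _ => by positivity, fun _ => by simp,
      fun x b => ?_⟩
    have hNx := (sum_eq_zero_iff_of_nonneg fun b _ => hN x b).1 ((hW x).trans hW0)
    rw [hW0, zero_mul, hNx b (mem_univ b)]
  · refine ⟨fun x b => N x b / W, fun x b => ?_, fun x => ?_, fun x b => mul_div_cancel₀ _ hW0⟩
    · exact div_nonneg (hN x b) (hW x ▸ sum_nonneg fun b _ => hN x b)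
    · rw [← sum_div, hW x, div_self hW0]

def HasDeterministicBobModel {X Y A B : Type*} [Fintype Y] [DecidableEq Y] [Fintype A]
    [Fintype B] [DecidableEq B] (p : X → Y → A → B → ℝ) : Prop :=
  ∃ (w : (Y → B) → ℝ) (f : (Y → B) → X → A → ℝ),
    (∀ γ, 0 ≤ w γ) ∧ (∑ γ, w γ = 1) ∧
    (∀ γ x a, 0 ≤ f γ x a) ∧ (∀ γ x, ∑ a, f γ x a = 1) ∧
    ∀ x y a b, p x y a b = ∑ γ, w γ * f γ x a * (if b = γ y then 1 else 0)

theorem convex_setOf_hasDeterministicBobModel {X Y A B : Type*} [Fintype Y] [DecidableEq Y]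
    [Fintype A] [Nonempty A] [Fintype B] [DecidableEq B] :
    Convex ℝ {p : X → Y → A → B → ℝ | HasDeterministicBobModel p} := by
  rintro p ⟨w₁, f₁, hw₁, hw₁_sum, hf₁, hf₁_sum, hp⟩ q ⟨w₂, f₂, hw₂, hw₂_sum, hf₂, hf₂_sum, hq⟩
    s t hs ht hst
  have hmix : ∀ γ, ∃ f : X → A → ℝ, (∀ x a, 0 ≤ f x a) ∧ (∀ x, ∑ a, f x a = 1) ∧
      ∀ x a, (s * w₁ γ + t * w₂ γ) * f x a = s * (w₁ γ * f₁ γ x a) + t * (w₂ γ * f₂ γ x a) :=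
    fun γ => exists_stochastic_mul_eq _ _
      (fun x a => add_nonneg (mul_nonneg hs (mul_nonneg (hw₁ γ) (hf₁ γ x a)))
        (mul_nonneg ht (mul_nonneg (hw₂ γ) (hf₂ γ x a))))
      fun x => by simp only [sum_add_distrib, ← mul_sum, hf₁_sum, hf₂_sum, mul_one]
  choose f hf hf_sum hf_mix using hmix
  refine ⟨fun γ => s * w₁ γ + t * w₂ γ, f, fun γ => by have := hw₁ γ; have := hw₂ γ; positivity,
    by rw [sum_add_distrib, ← mul_sum, ← mul_sum, hw₁_sum, hw₂_sum, mul_one, mul_one, hst],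
    hf, hf_sum, fun x y a b => ?_⟩
  simp only [Pi.add_apply, Pi.smul_apply, smul_eq_mul, hp, hq, hf_mix, mul_sum, ← sum_add_distrib]
  exact sum_congr rfl fun γ _ => by ring

theorem IsProductBox.hasDeterministicBobModel {m v : ℕ} {p : Fin m → Fin m → Fin v → Fin v → ℝ}
    (hp : IsProductBox m v p) : HasDeterministicBobModel p := by
  obtain ⟨F, G, hF, hG, hF_sum, hG_sum, hp⟩ := hp
  refine ⟨fun γ => ∏ y, G y (γ y), fun _ => F, fun γ => prod_nonneg fun y _ => hG y (γ y),
    Fintype.sum_pi_prod_eq_one G hG_sum, fun _ => hF, fun _ => hF_sum, fun x y a b => ?_⟩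
  rw [hp, ← Fintype.sum_pi_prod_mul_ite_eq G hG_sum y b, mul_sum]
  exact sum_congr rfl fun γ _ => by ring

theorem local_polytope_deterministic_Bob_general (m v : ℕ) (hv : 1 ≤ v)
    (p : Fin m → Fin m → Fin v → Fin v → ℝ)
    (hp : p ∈ convexHull ℝ
      {r : Fin m → Fin m → Fin v → Fin v → ℝ | IsProductBox m v r}) :
    ∃ (w : (Fin m → Fin v) → ℝ) (f : (Fin m → Fin v) → Fin m → Fin v → ℝ),
      (∀ g, 0 ≤ w g) ∧ (∑ g : Fin m → Fin v, w g = 1) ∧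
      (∀ g x a, 0 ≤ f g x a) ∧ (∀ g x, ∑ a, f g x a = 1) ∧
      ∀ x y a b, p x y a b =
        ∑ g : Fin m → Fin v, w g * f g x a * (if b = g y then 1 else 0) := by
  have : Nonempty (Fin v) := ⟨⟨0, hv⟩⟩
  exact convexHull_min (fun _ => IsProductBox.hasDeterministicBobModel)
    convex_setOf_hasDeterministicBobModel hp

/-- every box in the local polytope admits a decomposition in which
Bob's responses depend deterministically on the shared variable, which ranges over
the `v^m` functions `Fin m → Fin v`. -/
theorem local_polytope_deterministic_Bob (m v : ℕ) (hm : 1 ≤ m) (hv : 1 ≤ v)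
    (p : Fin m → Fin m → Fin v → Fin v → ℝ)
    (hp : p ∈ convexHull ℝ
      {r : Fin m → Fin m → Fin v → Fin v → ℝ | IsProductBox m v r}) :
    ∃ (w : (Fin m → Fin v) → ℝ) (f : (Fin m → Fin v) → Fin m → Fin v → ℝ),
      (∀ g, 0 ≤ w g) ∧ (∑ g : Fin m → Fin v, w g = 1) ∧
      (∀ g x a, 0 ≤ f g x a) ∧ (∀ g x, ∑ a, f g x a = 1) ∧
      ∀ x y a b, p x y a b =
        ∑ g : Fin m → Fin v, w g * f g x a * (if b = g y then 1 else 0) :=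
  local_polytope_deterministic_Bob_general m v hv p hp
end

section
/- (Fenchel's theorem) Let E be a real normed vector space with finite dimension F ≥ 1, and let S ⊆ E be a nonempty compact, path-connected set. Then every point x ∈ convexHull ℝ S can be written as a convex combination of at most F points of S: there exist w : Fin F → ℝ nonnegative with ∑_i w i = 1 and s : Fin F → E with s i ∈ S for all i, such that x = ∑_i w i • s i. -/
/-!
By Carathéodory, `x` is a combination with positive weights of affinely independent points of `S`;
at most `F` of them unless there are `F + 1`, forming an affine basis `b`. Then consider the ratios
`r i y = b.coord i y / b.coord i x`. At `y = b i₀` their maximum is attained only at `i₀`, at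
`y = b i₁` it is attained elsewhere, so on the connected set `S` there is a `y` at which it is
attained both at `i₀` and at some `j ≠ i₀`. Replacing `b i₀` by `y` keeps `x` in the convex hull,
now with weight zero at `b j`, which leaves `F` points.
-/

open Finset Function

def IsConvexCombinationOf (𝕜 : Type*) {E : Type*} [Semiring 𝕜] [PartialOrder 𝕜] [AddCommMonoid E]
    [Module 𝕜 E] (ι : Type*) [Fintype ι] (S : Set E) (x : E) : Prop :=
  ∃ (w : ι → 𝕜) (z : ι → E), (∀ i, 0 ≤ w i) ∧ ∑ i, w i = 1 ∧ (∀ i, z i ∈ S) ∧ x = ∑ i, w i • z i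

section ConvexCombination

variable {𝕜 E ι κ : Type*} [Semiring 𝕜] [PartialOrder 𝕜] [AddCommMonoid E] [Module 𝕜 E]
  [Fintype ι] [Fintype κ] {S : Set E}

theorem IsConvexCombinationOf.of_card_le [Nontrivial 𝕜] {x : E}
    (h : IsConvexCombinationOf 𝕜 ι S x) (hcard : Fintype.card ι ≤ Fintype.card κ) :
    IsConvexCombinationOf 𝕜 κ S x := by
  classical
  obtain ⟨w, z, hw₀, hw₁, hz, rfl⟩ := h
  obtain ⟨i₁, -⟩ := exists_ne_zero_of_sum_ne_zero (hw₁.symm ▸ one_ne_zero : ∑ i, w i ≠ 0)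
  obtain ⟨f⟩ := Function.Embedding.nonempty_of_card_le hcard
  have hf := f.injective
  refine ⟨extend f w 0, extend f z fun _ ↦ z i₁, fun k ↦ ?_, ?_, fun k ↦ ?_, ?_⟩
  · rw [extend_def]
    split_ifs
    exacts [hw₀ _, le_rfl]
  · rw [← hw₁]
    exact (Fintype.sum_of_injective f hf w _ (fun k hk ↦ by simp [extend_apply' _ _ _ hk])
      fun i ↦ (hf.extend_apply _ _ _).symm).symm
  · rw [extend_def]
    split_ifs
    exacts [hz _, hz i₁]
  · exact Fintype.sum_of_injective f hf _ _ (fun k hk ↦ by simp [extend_apply' _ _ _ hk])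
      fun i ↦ by simp [hf.extend_apply]

theorem isConvexCombinationOf_subtype_ne [DecidableEq ι] {w : ι → 𝕜} {z : ι → E}
    (hw₀ : ∀ i, 0 ≤ w i) (hw₁ : ∑ i, w i = 1) (hz : ∀ i, z i ∈ S) {j : ι} (hj : w j = 0) :
    IsConvexCombinationOf 𝕜 {i // i ≠ j} S (∑ i, w i • z i) := by
  refine ⟨fun i ↦ w i, fun i ↦ z i, fun i ↦ hw₀ i, ?_, fun i ↦ hz i, ?_⟩
  · rw [← hw₁, Fintype.sum_eq_add_sum_subtype_ne w j, hj, zero_add]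
  · rw [Fintype.sum_eq_add_sum_subtype_ne _ j, hj, zero_smul, zero_add]

end ConvexCombination

theorem Fintype.sum_update_of_eq_zero {ι M : Type*} [Fintype ι] [DecidableEq ι] [AddCommMonoid M]
    {f : ι → M} {i₀ : ι} (h : f i₀ = 0) (v : M) : ∑ i, update f i₀ v i = v + ∑ i, f i := by
  rw [sum_update_of_mem (mem_univ i₀), sdiff_singleton_eq_erase, sum_erase _ h]

namespace AffineBasis

theorem coord_sum_smul {k V ι : Type*} [Ring k] [AddCommGroup V] [Module k V] [Fintype ι]
    (b : AffineBasis ι k V) {w : ι → k} (hw : ∑ i, w i = 1) (i : ι) :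
    b.coord i (∑ j, w j • b j) = w i := by
  rw [← univ.affineCombination_eq_linear_combination _ _ hw]
  exact b.coord_apply_combination_of_mem (mem_univ i) hw

section LinearOrderedField

variable {𝕜 E ι : Type*} [Field 𝕜] [LinearOrder 𝕜] [IsStrictOrderedRing 𝕜]
  [AddCommGroup E] [Module 𝕜 E] [Fintype ι] [DecidableEq ι]

/-- Write `r i = b.coord i y / b.coord i x` and `ρ = r i₀ = max_i r i`; then `ρ ≥ 1` since both
families of coordinates sum to `1`, and the identity
`x = ρ⁻¹ • y + ∑ i, (b.coord i x - ρ⁻¹ * b.coord i y) • b i` has nonnegative weights, the weight of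
`b i` vanishing exactly where `r i = ρ`. -/
theorem exists_sum_smul_update_eq (b : AffineBasis ι 𝕜 E) {x y : E} (hx : ∀ i, 0 < b.coord i x)
    {i₀ j : ι} (hji : j ≠ i₀) (hj : b.coord j y / b.coord j x = b.coord i₀ y / b.coord i₀ x)
    (hmax : ∀ i, b.coord i y / b.coord i x ≤ b.coord i₀ y / b.coord i₀ x) :
    ∃ μ : ι → 𝕜, (∀ i, 0 ≤ μ i) ∧ ∑ i, μ i = 1 ∧ μ j = 0 ∧
      ∑ i, μ i • update b i₀ y i = x := by
  set ρ := b.coord i₀ y / b.coord i₀ x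
  have hρ : 1 ≤ ρ := calc
    1 = ∑ i, b.coord i x * (b.coord i y / b.coord i x) := by
      simp only [mul_div_cancel₀ _ (hx _).ne', b.sum_coord_apply_eq_one]
    _ ≤ ∑ i, b.coord i x * ρ := by gcongr with i; exacts [(hx i).le, hmax i]
    _ = ρ := by rw [← sum_mul, b.sum_coord_apply_eq_one, one_mul]
  set ν : ι → 𝕜 := fun i ↦ b.coord i x - ρ⁻¹ * b.coord i y
  have hν : ∀ i, b.coord i y / b.coord i x = ρ → ν i = 0 := fun i hi ↦ by
    rw [div_eq_iff (hx i).ne'] at hi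
    simp only [ν, hi]
    field_simp
    ring
  refine ⟨update ν i₀ ρ⁻¹, fun i ↦ ?_, ?_, by simp [hji, hν j hj], ?_⟩
  · rcases eq_or_ne i i₀ with rfl | hi
    · simpa using zero_le_one.trans hρ
    · rw [update_of_ne hi, sub_nonneg, inv_mul_le_iff₀ (by positivity)]
      exact (div_le_iff₀ (hx i)).1 (hmax i)
  · rw [Fintype.sum_update_of_eq_zero (hν i₀ rfl), sum_sub_distrib, ← mul_sum,
      b.sum_coord_apply_eq_one, b.sum_coord_apply_eq_one]
    ring
  · have hsmul : (fun i ↦ update ν i₀ ρ⁻¹ i • update b i₀ y i) =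
        update (fun i ↦ ν i • b i) i₀ (ρ⁻¹ • y) :=
      funext (apply_update₂ (fun _ ↦ (· • ·)) ν b i₀ ρ⁻¹ y)
    rw [hsmul, Fintype.sum_update_of_eq_zero (by simp [hν i₀ rfl])]
    simp only [ν, sub_smul, sum_sub_distrib, mul_smul, ← smul_sum,
      b.linear_combination_coord_eq_self, add_sub_cancel]

end LinearOrderedField

section Normed

variable {E ι : Type*} [NormedAddCommGroup E] [NormedSpace ℝ E] [FiniteDimensional ℝ E] [Fintype ι]

theorem exists_mem_coord_div_eq_of_isPreconnected (b : AffineBasis ι ℝ E) {S : Set E}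
    (hS : IsPreconnected S) {x : E} (hx : ∀ i, 0 ≤ b.coord i x) {i₀ i₁ : ι} (hi : i₁ ≠ i₀)
    (h₀ : b i₀ ∈ S) (h₁ : b i₁ ∈ S) :
    ∃ y ∈ S, ∃ j ≠ i₀, b.coord j y / b.coord j x = b.coord i₀ y / b.coord i₀ x ∧
      ∀ i, b.coord i y / b.coord i x ≤ b.coord i₀ y / b.coord i₀ x := by
  classical
  set r : ι → E → ℝ := fun i y ↦ b.coord i y / b.coord i x
  have hne : (univ.erase i₀).Nonempty := ⟨i₁, mem_erase.2 ⟨hi, mem_univ _⟩⟩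
  set ψ : E → ℝ := fun y ↦ r i₀ y - (univ.erase i₀).sup' hne (r · y)
  have hψ : Continuous ψ :=
    ((continuous_barycentric_coord b i₀).div_const _).sub <|
      Continuous.finset_sup'_apply hne fun i _ ↦ (continuous_barycentric_coord b i).div_const _
  have hψ₀ : 0 ≤ ψ (b i₀) := by
    refine sub_nonneg.2 (sup'_le hne _ fun i hi ↦ ?_)
    simpa [r, b.coord_apply_ne (ne_of_mem_erase hi)] using hx i₀
  have hψ₁ : ψ (b i₁) ≤ 0 := by
    refine sub_nonpos.2 (le_sup'_of_le _ (mem_erase.2 ⟨hi, mem_univ _⟩) ?_)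
    simpa [r, b.coord_apply_ne hi.symm] using hx i₁
  obtain ⟨y, hyS, hy⟩ := hS.intermediate_value h₁ h₀ hψ.continuousOn ⟨hψ₁, hψ₀⟩
  have hsup : (univ.erase i₀).sup' hne (r · y) = r i₀ y := (sub_eq_zero.1 hy).symm
  obtain ⟨j, hj, hjmax⟩ := exists_mem_eq_sup' hne (r · y)
  refine ⟨y, hyS, j, ne_of_mem_erase hj, hjmax.symm.trans hsup, fun i ↦ ?_⟩
  rcases eq_or_ne i i₀ with rfl | hi
  · exact le_rfl
  · exact (le_sup' (r · y) (mem_erase.2 ⟨hi, mem_univ _⟩)).trans hsup.le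

theorem exists_isConvexCombinationOf_subtype_ne [DecidableEq ι] [Nontrivial ι]
    (b : AffineBasis ι ℝ E) {S : Set E} (hS : IsPreconnected S) (hbS : ∀ i, b i ∈ S) {x : E}
    (hx : ∀ i, 0 < b.coord i x) : ∃ j : ι, IsConvexCombinationOf ℝ {i // i ≠ j} S x := by
  obtain ⟨i₀, i₁, hi⟩ := exists_pair_ne ι
  obtain ⟨y, hyS, j, hji, hj, hmax⟩ :=
    b.exists_mem_coord_div_eq_of_isPreconnected hS (fun i ↦ (hx i).le) hi.symm (hbS i₀) (hbS i₁)
  obtain ⟨μ, hμ₀, hμ₁, hμj, rfl⟩ := b.exists_sum_smul_update_eq hx hji hj hmax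
  have hS' : ∀ i, update b i₀ y i ∈ S := (forall_update_iff _ _).2 ⟨hyS, fun i _ ↦ hbS i⟩
  exact ⟨j, isConvexCombinationOf_subtype_ne hμ₀ hμ₁ hS' hμj⟩

end Normed

end AffineBasis

theorem fenchel_caratheodory_for_connected_sets_general
    {E : Type*} [NormedAddCommGroup E] [NormedSpace ℝ E] [FiniteDimensional ℝ E]
    (F : ℕ) (hF : 1 ≤ F) (hdim : Module.finrank ℝ E = F)
    (S : Set E)
    (hpath : IsPathConnected S)
    (x : E) (hx : x ∈ convexHull ℝ S) :
    ∃ (w : Fin F → ℝ) (s : Fin F → E),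
      (∀ i, 0 ≤ w i) ∧ (∑ i, w i = 1) ∧
      (∀ i, s i ∈ S) ∧ x = ∑ i, w i • s i := by
  classical
  obtain ⟨ι, _, z, l, hzS, hz, hl₀, hl₁, rfl⟩ := eq_pos_convex_span_of_mem_convexHull hx
  have hzS : ∀ i, z i ∈ S := fun i ↦ hzS ⟨i, rfl⟩
  have hcard : Fintype.card ι ≤ F + 1 := hdim ▸ hz.card_le_finrank_succ.trans
    (Nat.succ_le_succ (Submodule.finrank_le _))
  rcases hcard.lt_or_eq with hlt | heq
  · exact IsConvexCombinationOf.of_card_le ⟨l, z, fun i ↦ (hl₀ i).le, hl₁, hzS, rfl⟩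
      (by simpa using Nat.lt_succ_iff.1 hlt)
  · let b : AffineBasis ι ℝ E :=
      ⟨z, hz, hz.affineSpan_eq_top_iff_card_eq_finrank_add_one.2 (hdim ▸ heq)⟩
    have : Nontrivial ι := Fintype.one_lt_card_iff_nontrivial.1 (by omega)
    obtain ⟨j, hj⟩ := b.exists_isConvexCombinationOf_subtype_ne hpath.isConnected.isPreconnected
      hzS fun i ↦ (hl₀ i).trans_eq (b.coord_sum_smul hl₁ i).symm
    exact hj.of_card_le (by simp [Fintype.card_subtype_compl, heq])

/-- Fenchel's theorem: in a real normed space of finite dimension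
`F ≥ 1`, every point of the convex hull of a nonempty compact path-connected set `S`
is a convex combination of at most `F` points of `S`. -/
theorem fenchel_caratheodory_for_connected_sets
    {E : Type*} [NormedAddCommGroup E] [NormedSpace ℝ E] [FiniteDimensional ℝ E]
    (F : ℕ) (hF : 1 ≤ F) (hdim : Module.finrank ℝ E = F)
    (S : Set E) (hS : S.Nonempty) (hcomp : IsCompact S)
    (hpath : IsPathConnected S)
    (x : E) (hx : x ∈ convexHull ℝ S) :
    ∃ (w : Fin F → ℝ) (s : Fin F → E),
      (∀ i, 0 ≤ w i) ∧ (∑ i, w i = 1) ∧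
      (∀ i, s i ∈ S) ∧ x = ∑ i, w i • s i :=
  fenchel_caratheodory_for_connected_sets_general F hF hdim S hpath x hx
end
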